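/- arXiv:2006.05458 — 12 statements merged into one kernel-verified Lean document; each statement's English description precedes it below -/
import Mathlib

section
/- If X_1, X_2, ... are iid random variables with continuous cdf F and infinite right-tail expectation (∫_0^∞ x f(x) dx = ∞), then for every real c and δ, the asymptotic δ-record probability p_δ(c) = ∫ ∏_{i=1}^∞ F(x+ci−δ) f(x) dx equals 0. -/
open MeasureTheory Set

/-- Asymptotic δ-record probability in the linear drift model with trend `c`:
`p_δ(c) = ∫ (∏_{i=1}^∞ F(x + c i − δ)) f(x) dx`. -/
noncomputable def pdelta (F f : ℝ → ℝ) (c δ : ℝ) : ℝ :=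
  ∫ x : ℝ, (∏' i : ℕ, F (x + c * (i + 1) - δ)) * f x

/-! Since `0 ≤ F ≤ 1`, the product `∏ F(x + c i - δ)` vanishes as soon as `∑ (1 - F(x + c i - δ))`
diverges. For `c > 0` this is `∑ P(X > y + c i)`, which counts the points of the grid `y + cℕ`
below `X` and so dominates `E[(X - y - c)⁺] / c`; this is infinite because `E[X⁺] = ∞`. For
`c ≤ 0` the factors are even smaller. So the integrand of `p_δ(c)` vanishes identically. -/

open Filter ProbabilityTheory

lemma tendsto_sum_atTop_atTop_of_not_summable {ι : Type*} {a : ι → ℝ} (ha : 0 ≤ a)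
    (h : ¬Summable a) : Tendsto (fun s : Finset ι => ∑ i ∈ s, a i) atTop atTop :=
  tendsto_atTop_atTop_of_monotone' (Finset.sum_mono_set_of_nonneg ha)
    fun ⟨_, hC⟩ => h (summable_of_sum_le ha fun s => hC ⟨s, rfl⟩)

lemma tprod_eq_zero_of_not_summable_one_sub {ι : Type*} {g : ι → ℝ} (h0 : ∀ i, 0 ≤ g i)
    (h1 : ∀ i, g i ≤ 1) (h : ¬Summable fun i => 1 - g i) : ∏' i, g i = 0 := by
  have hsum := tendsto_sum_atTop_atTop_of_not_summable (fun i => sub_nonneg.2 (h1 i)) h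
  refine HasProd.tprod_eq <| squeeze_zero (fun s => Finset.prod_nonneg fun i _ => h0 i)
    (fun s => ?_) (Real.tendsto_exp_atBot.comp (tendsto_neg_atTop_atBot.comp hsum))
  calc ∏ i ∈ s, g i ≤ ∏ i ∈ s, Real.exp (g i - 1) :=
        Finset.prod_le_prod (fun i _ => h0 i) fun i _ => by linarith [Real.add_one_le_exp (g i - 1)]
    _ = Real.exp (-∑ i ∈ s, (1 - g i)) := by
        rw [← Real.exp_sum, ← Finset.sum_neg_distrib]; simp only [neg_sub]

lemma natCast_le_tsum_indicator_Ioi {a : ℕ → ℝ} {s : ℝ} {n : ℕ} (h : ∀ i < n, a i < s) :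
    (n : ENNReal) ≤ ∑' i, (Ioi (a i)).indicator 1 s :=
  calc (n : ENNReal) = ∑ i ∈ Finset.range n, (Ioi (a i)).indicator (1 : ℝ → ENNReal) s := by
        rw [Finset.sum_congr rfl fun i hi =>
          indicator_of_mem (mem_Ioi.2 (h i (Finset.mem_range.1 hi))) _]
        simp
    _ ≤ _ := ENNReal.sum_le_tsum _

lemma ofReal_le_mul_tsum_indicator_Ioi_add {c : ℝ} (hc : 0 < c) (y s : ℝ) :
    ENNReal.ofReal s ≤ ENNReal.ofReal c * ∑' i : ℕ, (Ioi (y + c * (i + 1))).indicator 1 s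
      + ENNReal.ofReal (y + c) := by
  set n := ⌈(s - y - c) / c⌉₊
  have hcount : (n : ENNReal) ≤ ∑' i : ℕ, (Ioi (y + c * (i + 1))).indicator 1 s := by
    refine natCast_le_tsum_indicator_Ioi fun i hi => ?_
    have := (lt_div_iff₀ hc).1 (Nat.lt_ceil.1 hi)
    linarith
  have hs : s ≤ c * n + (y + c) := by
    have := (div_le_iff₀ hc).1 (Nat.le_ceil ((s - y - c) / c))
    linarith
  calc ENNReal.ofReal s ≤ ENNReal.ofReal (c * n) + ENNReal.ofReal (y + c) :=
        (ENNReal.ofReal_le_ofReal hs).trans ENNReal.ofReal_add_le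
    _ ≤ _ := by
        rw [ENNReal.ofReal_mul hc.le, ENNReal.ofReal_natCast]
        gcongr

theorem tsum_measure_Ioi_eq_top {μ : Measure ℝ} [IsFiniteMeasure μ]
    (hμ : ∫⁻ x, ENNReal.ofReal x ∂μ = ⊤) {c : ℝ} (hc : 0 < c) (y : ℝ) :
    ∑' i : ℕ, μ (Ioi (y + c * (i + 1))) = ⊤ := by
  have hbound : ⊤ ≤ ENNReal.ofReal c * ∑' i : ℕ, μ (Ioi (y + c * (i + 1)))
      + ENNReal.ofReal (y + c) * μ univ :=
    calc ⊤ = ∫⁻ x, ENNReal.ofReal x ∂μ := hμ.symm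
      _ ≤ ∫⁻ s, ENNReal.ofReal c * ∑' i : ℕ, (Ioi (y + c * (i + 1))).indicator 1 s
            + ENNReal.ofReal (y + c) ∂μ :=
        lintegral_mono (ofReal_le_mul_tsum_indicator_Ioi_add hc y)
      _ = _ := by
        rw [lintegral_add_right _ measurable_const, lintegral_const,
          lintegral_const_mul' _ _ ENNReal.ofReal_ne_top,
          lintegral_tsum fun i => (measurable_one.indicator measurableSet_Ioi).aemeasurable]
        simp only [lintegral_indicator_one measurableSet_Ioi]
  by_contra hne
  exact (ENNReal.add_ne_top.2 ⟨ENNReal.mul_ne_top ENNReal.ofReal_ne_top hne,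
    ENNReal.mul_ne_top ENNReal.ofReal_ne_top (measure_ne_top μ univ)⟩) (top_le_iff.1 hbound)

section cdf

variable {μ : Measure ℝ} [IsProbabilityMeasure μ]

lemma ofReal_one_sub_cdf (x : ℝ) : ENNReal.ofReal (1 - cdf μ x) = μ (Ioi x) := by
  rw [ENNReal.ofReal_sub _ (cdf_nonneg μ x), ofReal_cdf, ENNReal.ofReal_one,
    ← prob_compl_eq_one_sub measurableSet_Iic, compl_Iic]

lemma not_summable_one_sub_cdf (hμ : ∫⁻ x, ENNReal.ofReal x ∂μ = ⊤) {c : ℝ} (hc : 0 < c)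
    (y : ℝ) : ¬Summable fun i : ℕ => 1 - cdf μ (y + c * (i + 1)) := by
  intro hs
  have := ENNReal.ofReal_tsum_of_nonneg (fun i => sub_nonneg.2 (cdf_le_one μ _)) hs
  simp only [ofReal_one_sub_cdf, tsum_measure_Ioi_eq_top hμ hc] at this
  exact ENNReal.ofReal_ne_top this

theorem tprod_cdf_eq_zero (hμ : ∫⁻ x, ENNReal.ofReal x ∂μ = ⊤) (c y : ℝ) :
    ∏' i : ℕ, cdf μ (y + c * (i + 1)) = 0 := by
  refine tprod_eq_zero_of_not_summable_one_sub (fun i => cdf_nonneg μ _)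
    (fun i => cdf_le_one μ _) fun hs => ?_
  -- raising `c` to `max c 1` raises every factor, so the case `c ≤ 0` reduces to `c > 0`
  refine not_summable_one_sub_cdf hμ (c := max c 1) (lt_max_of_lt_right one_pos) y
    (hs.of_nonneg_of_le (fun i => sub_nonneg.2 (cdf_le_one μ _)) fun i => ?_)
  gcongr 1 - ?_
  exact monotone_cdf μ (by gcongr; exact le_max_left c 1)

end cdf

section density

variable {f : ℝ → ℝ}

lemma isProbabilityMeasure_withDensity_ofReal (hf : ∀ x, 0 ≤ f x) (hprob : ∫ x, f x = 1) :
    IsProbabilityMeasure (volume.withDensity fun x => ENNReal.ofReal (f x)) := by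
  have hfi : Integrable f := Integrable.of_integral_ne_zero (by simp [hprob])
  constructor
  rw [withDensity_apply _ MeasurableSet.univ, Measure.restrict_univ,
    ← ofReal_integral_eq_lintegral_ofReal hfi (ae_of_all _ hf), hprob, ENNReal.ofReal_one]

lemma cdf_withDensity_ofReal (hf : ∀ x, 0 ≤ f x) (hfm : Measurable f)
    [IsProbabilityMeasure (volume.withDensity fun x => ENNReal.ofReal (f x))] (x : ℝ) :
    cdf (volume.withDensity fun x => ENNReal.ofReal (f x)) x = ∫ t in Iic x, f t := by
  rw [cdf_eq_real, measureReal_def, withDensity_apply _ measurableSet_Iic,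
    integral_eq_lintegral_of_nonneg_ae (ae_of_all _ hf) hfm.aestronglyMeasurable]

lemma lintegral_ofReal_withDensity_eq_top (hf : ∀ x, 0 ≤ f x) (hfm : Measurable f)
    (hmu : ¬IntegrableOn (fun x => x * f x) (Ioi 0)) :
    ∫⁻ x, ENNReal.ofReal x ∂(volume.withDensity fun x => ENNReal.ofReal (f x)) = ⊤ := by
  have htail : ∫⁻ x in Ioi 0, ENNReal.ofReal (x * f x) = ⊤ := by
    by_contra h
    refine hmu ((lintegral_ofReal_ne_top_iff_integrable
      (measurable_id.mul hfm).aestronglyMeasurable ?_).1 h)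
    filter_upwards [ae_restrict_mem measurableSet_Ioi] with x hx
    exact mul_nonneg (le_of_lt hx) (hf x)
  rw [lintegral_withDensity_eq_lintegral_mul _ hfm.ennreal_ofReal ENNReal.measurable_ofReal,
    eq_top_iff, ← htail]
  refine (setLIntegral_le_lintegral _ _).trans (lintegral_mono fun x => ?_)
  simp only [Pi.mul_apply, mul_comm x, ENNReal.ofReal_mul (hf x), le_refl]

end density

/-- If the iid observations have infinite right-tail expectation `μ⁺ = ∫_0^∞ x f(x) dx = ∞`,
then the asymptotic δ-record probability vanishes for every `c` and `δ`. -/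
theorem stmt0 (F f : ℝ → ℝ) (hf : ∀ x, 0 ≤ f x) (hfm : Measurable f)
    (hcdf : ∀ x, F x = ∫ t in Iic x, f t)
    (hprob : ∫ x : ℝ, f x = 1)
    (hmu : ¬ IntegrableOn (fun x => x * f x) (Ioi (0 : ℝ))) :
    ∀ c δ : ℝ, pdelta F f c δ = 0 := by
  intro c δ
  have := isProbabilityMeasure_withDensity_ofReal hf hprob
  have hF : ∀ x, F x = cdf (volume.withDensity fun x => ENNReal.ofReal (f x)) x :=
    fun x => (hcdf x).trans (cdf_withDensity_ofReal hf hfm x).symm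
  have hprod : ∀ x, ∏' i : ℕ, F (x + c * (i + 1) - δ) = 0 := fun x => by
    simpa only [hF, add_sub_right_comm] using
      tprod_cdf_eq_zero (lintegral_ofReal_withDensity_eq_top hf hfm hmu) c (x - δ)
  simp [pdelta, hprod]
end

section
/- If μ⁺ < ∞, c > 0 and x_+ − x_- > δ − c, then p_δ(c) > 0; conversely if c > 0 and x_+ − x_- ≤ δ − c then p_δ(c) = 0. -/
/-!
All factors `F(x + c(i+1) - δ)` of the integrand lie in `[0, 1]`, and the first one,
`F(x - (δ - c))`, is the smallest.

If `x₊ - x₋ ≤ δ - c`, then `x - (δ - c) ≤ x₋` for every `x` in the support of `f`, so that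
first factor vanishes there and the integrand is identically zero.

If `x₊ - x₋ > δ - c`, there is an interval of points `x` of the support with
`x - (δ - c) > x₋`, on which every factor is positive. The infinite product is then positive,
since `∑ᵢ (1 - F(a + c(i+1))) = ∑ᵢ P(X > a + c(i+1)) ≤ E[(X - a)⁺] / c`, which is finite
when `μ⁺ < ∞`.
-/

open MeasureTheory Set

lemma tprod_le_one_of_le_one {ι : Type*} {u : ι → ℝ} (h0 : ∀ i, 0 ≤ u i) (h1 : ∀ i, u i ≤ 1) :
    ∏' i, u i ≤ 1 := by
  by_cases hu : Multipliable u
  · exact le_of_tendsto' hu.hasProd fun s =>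
      Finset.prod_le_one (fun i _ => h0 i) (fun i _ => h1 i)
  · rw [tprod_eq_one_of_not_multipliable hu]

lemma tprod_pos_of_summable_one_sub {ι : Type*} {u : ι → ℝ} (h0 : ∀ i, 0 < u i)
    (hs : Summable fun i => 1 - u i) : 0 < ∏' i, u i := by
  have hlog : Summable fun i => Real.log (u i) := by
    simpa using Real.summable_log_one_add_of_summable hs.neg
  rw [← Real.rexp_tsum_eq_tprod h0 hlog]
  exact Real.exp_pos _

lemma exists_Ioo_subset_of_coe_lt_sub {a b : EReal} (hab : a < b) {r : ℝ}
    (h : (r : EReal) < b - a) :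
    ∃ u v : ℝ, u < v ∧ ∀ x ∈ Ioo u v, a < x ∧ (x : EReal) < b ∧ a < ((x - r : ℝ) : EReal) := by
  obtain ⟨u, hu, hub⟩ := EReal.exists_between_coe_real (max_lt hab (EReal.add_lt_of_lt_sub h))
  obtain ⟨v, huv, hvb⟩ := EReal.exists_between_coe_real hub
  refine ⟨u, v, mod_cast huv, fun x hx => ?_⟩
  have hux : (u : EReal) < x := mod_cast hx.1
  refine ⟨(le_max_left _ _).trans_lt (hu.trans hux),
    (show (x : EReal) < v from mod_cast hx.2).trans hvb, ?_⟩
  rw [EReal.coe_sub,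
    EReal.lt_sub_iff_add_lt (.inl (EReal.coe_ne_bot r)) (.inl (EReal.coe_ne_top r)), add_comm]
  exact (le_max_right _ _).trans_lt (hu.trans hux)

lemma coe_sub_lt_of_sub_le_coe {a b : EReal} {r x : ℝ} (h : b - a ≤ r) (hxb : (x : EReal) < b) :
    ((x - r : ℝ) : EReal) < a := by
  rw [EReal.coe_sub]
  exact EReal.sub_lt_of_lt_add' <| hxb.trans_le <|
    (EReal.sub_le_iff_le_add (.inr (EReal.coe_ne_top r)) (.inr (EReal.coe_ne_bot r))).1 h

lemma setIntegral_pos_of_Ioo_subset {g : ℝ → ℝ} {s : Set ℝ} {u v : ℝ} (hg : ∀ x, 0 ≤ g x)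
    (hgi : IntegrableOn g s) (huv : u < v) (hsub : Ioo u v ⊆ s) (hpos : ∀ x ∈ Ioo u v, 0 < g x) :
    0 < ∫ x in s, g x := by
  rw [setIntegral_pos_iff_support_of_nonneg_ae (ae_of_all _ hg) hgi]
  refine lt_of_lt_of_le ?_ (measure_mono fun x hx => ⟨(hpos x hx).ne', hsub hx⟩)
  simpa using huv

lemma integrableOn_Ioi_id_mul_of_integrableOn_Ioi_zero {f : ℝ → ℝ} (hfi : Integrable f)
    (h0 : IntegrableOn (fun t => t * f t) (Ioi 0)) (a : ℝ) :
    IntegrableOn (fun t => t * f t) (Ioi a) := by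
  have hK : IntegrableOn (fun t => t * f t) (Icc a 0) :=
    hfi.integrableOn.continuousOn_mul continuousOn_id isCompact_Icc
  exact (hK.union h0).mono_set fun t ht => (le_or_gt t 0).imp (fun h => ⟨le_of_lt ht, h⟩) id

lemma card_filter_add_mul_succ_lt_le {a c t : ℝ} (hc : 0 < c) (hat : a ≤ t) (n : ℕ) :
    (((Finset.range n).filter fun i : ℕ => a + c * (i + 1) < t).card : ℝ) ≤ (t - a) / c := by
  have hsub : (Finset.range n).filter (fun i : ℕ => a + c * (i + 1) < t) ⊆
      Finset.range ⌊(t - a) / c⌋₊ := by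
    intro i hi
    rw [Finset.mem_filter] at hi
    rw [Finset.mem_range, Nat.lt_iff_add_one_le]
    refine Nat.le_floor ?_
    rw [le_div_iff₀ hc]
    push_cast
    linarith [hi.2]
  calc (((Finset.range n).filter fun i : ℕ => a + c * (i + 1) < t).card : ℝ)
      ≤ ⌊(t - a) / c⌋₊ := mod_cast (Finset.card_le_card hsub).trans_eq (Finset.card_range _)
    _ ≤ (t - a) / c := Nat.floor_le (div_nonneg (sub_nonneg.2 hat) hc.le)

lemma sum_indicator_Ioi_add_mul_le {f : ℝ → ℝ} {c t : ℝ} (hc : 0 < c) (hft : 0 ≤ f t) (a : ℝ)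
    (n : ℕ) :
    ∑ i ∈ Finset.range n, (Ioi (a + c * (i + 1))).indicator f t ≤
      (Ioi a).indicator (fun t => (t - a) / c * f t) t := by
  by_cases hat : a < t
  · rw [indicator_of_mem (mem_Ioi.2 hat)]
    simp only [indicator_apply, mem_Ioi]
    rw [← Finset.sum_filter, Finset.sum_const, nsmul_eq_mul]
    exact mul_le_mul_of_nonneg_right (card_filter_add_mul_succ_lt_le hc hat.le n) hft
  · rw [indicator_of_notMem (s := Ioi a) hat]
    refine (Finset.sum_eq_zero fun i _ => indicator_of_notMem ?_ f).le
    simp only [mem_Ioi, not_lt] at hat ⊢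
    nlinarith [(Nat.cast_nonneg i : (0 : ℝ) ≤ i)]

lemma summable_integral_Ioi_add_mul {f : ℝ → ℝ} {a c : ℝ} (hf : ∀ x, 0 ≤ f x)
    (hfi : Integrable f) (hmom : IntegrableOn (fun t => t * f t) (Ioi a)) (hc : 0 < c) :
    Summable fun i : ℕ => ∫ t in Ioi (a + c * (i + 1)), f t := by
  have hg : IntegrableOn (fun t => (t - a) / c * f t) (Ioi a) := by
    have h : IntegrableOn (fun t => c⁻¹ * (t * f t) - a / c * f t) (Ioi a) :=
      (hmom.const_mul c⁻¹).sub (hfi.integrableOn.const_mul (a / c))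
    refine h.congr_fun (fun t _ => ?_) measurableSet_Ioi
    field_simp
  have hind : ∀ i : ℕ, Integrable ((Ioi (a + c * (i + 1))).indicator f) :=
    fun i => hfi.indicator measurableSet_Ioi
  refine summable_of_sum_range_le (c := ∫ t in Ioi a, (t - a) / c * f t)
    (fun i => setIntegral_nonneg measurableSet_Ioi fun t _ => hf t) fun n => ?_
  calc ∑ i ∈ Finset.range n, ∫ t in Ioi (a + c * (i + 1)), f t
      = ∫ t, ∑ i ∈ Finset.range n, (Ioi (a + c * (i + 1))).indicator f t := by
        rw [integral_finsetSum _ fun i _ => hind i]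
        simp only [integral_indicator measurableSet_Ioi]
    _ ≤ ∫ t, (Ioi a).indicator (fun t => (t - a) / c * f t) t :=
        integral_mono (integrable_finsetSum _ fun i _ => hind i)
          (hg.integrable_indicator measurableSet_Ioi)
          fun t => sum_indicator_Ioi_add_mul_le hc (hf t) a n
    _ = ∫ t in Ioi a, (t - a) / c * f t := integral_indicator measurableSet_Ioi

section DistributionFunction

variable {F f : ℝ → ℝ}

lemma cdf_nonneg (hf : ∀ x, 0 ≤ f x) (hcdf : ∀ x, F x = ∫ t in Iic x, f t) (y : ℝ) : 0 ≤ F y :=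
  (hcdf y).symm ▸ setIntegral_nonneg measurableSet_Iic fun t _ => hf t

lemma cdf_mono (hf : ∀ x, 0 ≤ f x) (hcdf : ∀ x, F x = ∫ t in Iic x, f t) (hfi : Integrable f) :
    Monotone F := fun y z hyz => by
  rw [hcdf, hcdf]
  exact setIntegral_mono_set hfi.integrableOn (ae_of_all _ hf) (Iic_subset_Iic.2 hyz).eventuallyLE

lemma cdf_le_one (hf : ∀ x, 0 ≤ f x) (hcdf : ∀ x, F x = ∫ t in Iic x, f t) (hfi : Integrable f)
    (hprob : ∫ x, f x = 1) (y : ℝ) : F y ≤ 1 := by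
  rw [hcdf, ← hprob]
  exact setIntegral_le_integral hfi (ae_of_all _ hf)

lemma one_sub_cdf (hcdf : ∀ x, F x = ∫ t in Iic x, f t) (hfi : Integrable f)
    (hprob : ∫ x, f x = 1) (y : ℝ) : 1 - F y = ∫ t in Ioi y, f t := by
  have h := integral_add_compl (measurableSet_Iic (a := y)) hfi
  rw [compl_Iic, hprob] at h
  rw [hcdf]
  linarith

lemma cdf_pos {xm xp : EReal} (hx : xm < xp) (hf : ∀ x, 0 ≤ f x)
    (hsupp : ∀ x : ℝ, 0 < f x ↔ (xm < (x : EReal) ∧ (x : EReal) < xp))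
    (hcdf : ∀ x, F x = ∫ t in Iic x, f t) (hfi : Integrable f) {y : ℝ} (hy : xm < y) :
    0 < F y := by
  obtain ⟨v, hv, hvy⟩ := EReal.exists_between_coe_real (lt_min hy hx)
  obtain ⟨u, hu, huv⟩ := EReal.exists_between_coe_real hv
  have hvy' : v ≤ y := mod_cast (hvy.trans_le (min_le_left _ _)).le
  have hvp : (v : EReal) < xp := hvy.trans_le (min_le_right _ _)
  rw [hcdf]
  refine setIntegral_pos_of_Ioo_subset hf hfi.integrableOn (mod_cast huv)
    (fun t ht => (ht.2.le.trans hvy' : t ≤ y)) fun t ht => (hsupp t).2 ?_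
  exact ⟨hu.trans (mod_cast ht.1), (show (t : EReal) < v from mod_cast ht.2).trans hvp⟩

lemma cdf_eq_zero {xm xp : EReal} (hf : ∀ x, 0 ≤ f x)
    (hsupp : ∀ x : ℝ, 0 < f x ↔ (xm < (x : EReal) ∧ (x : EReal) < xp))
    (hcdf : ∀ x, F x = ∫ t in Iic x, f t) {y : ℝ} (hy : (y : EReal) ≤ xm) : F y = 0 := by
  rw [hcdf]
  refine setIntegral_eq_zero_of_forall_eq_zero fun t ht => (hf t).antisymm' ?_
  exact not_lt.1 fun hft => ((hsupp t).1 hft).1.not_ge ((EReal.coe_le_coe_iff.2 ht).trans hy)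

end DistributionFunction

lemma integrable_tprod_mul {f : ℝ → ℝ} {u : ℕ → ℝ → ℝ} (hu : ∀ i, Measurable (u i))
    (h0 : ∀ i x, 0 ≤ u i x) (h1 : ∀ i x, u i x ≤ 1) (hfi : Integrable f) :
    Integrable fun x => (∏' i, u i x) * f x := by
  refine hfi.bdd_mul (c := 1) (Measurable.tprod hu).aestronglyMeasurable (ae_of_all _ fun x => ?_)
  rw [Real.norm_eq_abs, abs_of_nonneg (tprod_nonneg fun i => h0 i x)]
  exact tprod_le_one_of_le_one (fun i => h0 i x) (fun i => h1 i x)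

section Pdelta

variable {F f : ℝ → ℝ} {xm xp : EReal} {c δ : ℝ}

theorem pdelta_pos (hx : xm < xp) (hf : ∀ x, 0 ≤ f x)
    (hsupp : ∀ x : ℝ, 0 < f x ↔ (xm < (x : EReal) ∧ (x : EReal) < xp))
    (hcdf : ∀ x, F x = ∫ t in Iic x, f t) (hprob : ∫ x : ℝ, f x = 1) (hc : 0 < c)
    (hmom : IntegrableOn (fun x => x * f x) (Ioi 0)) (hlt : ((δ - c : ℝ) : EReal) < xp - xm) :
    0 < pdelta F f c δ := by
  have hfi : Integrable f := .of_integral_ne_zero (hprob ▸ one_ne_zero)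
  have hF0 : ∀ y, 0 ≤ F y := cdf_nonneg hf hcdf
  obtain ⟨u, v, huv, hmem⟩ := exists_Ioo_subset_of_coe_lt_sub hx hlt
  have hint := integrable_tprod_mul (u := fun i x => F (x + c * (i + 1) - δ))
    (fun i => (cdf_mono hf hcdf hfi).measurable.comp (by fun_prop))
    (fun i x => hF0 _) (fun i x => cdf_le_one hf hcdf hfi hprob _) hfi
  rw [pdelta, ← setIntegral_univ]
  refine setIntegral_pos_of_Ioo_subset (fun x => mul_nonneg (tprod_nonneg fun i => hF0 _) (hf x))
    hint.integrableOn huv (subset_univ _) fun x hx' => ?_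
  obtain ⟨hxm, hxp, hxr⟩ := hmem x hx'
  refine mul_pos (tprod_pos_of_summable_one_sub (fun i => cdf_pos hx hf hsupp hcdf hfi ?_) ?_)
    ((hsupp x).2 ⟨hxm, hxp⟩)
  · refine hxr.trans_le (EReal.coe_le_coe_iff.2 ?_)
    nlinarith [(Nat.cast_nonneg i : (0 : ℝ) ≤ i)]
  · simp_rw [one_sub_cdf hcdf hfi hprob]
    convert summable_integral_Ioi_add_mul hf hfi
      (integrableOn_Ioi_id_mul_of_integrableOn_Ioi_zero hfi hmom (x - δ)) hc using 5
    ring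

theorem pdelta_eq_zero (hf : ∀ x, 0 ≤ f x)
    (hsupp : ∀ x : ℝ, 0 < f x ↔ (xm < (x : EReal) ∧ (x : EReal) < xp))
    (hcdf : ∀ x, F x = ∫ t in Iic x, f t) (hle : xp - xm ≤ ((δ - c : ℝ) : EReal)) :
    pdelta F f c δ = 0 := by
  have hzero : ∀ x, (∏' i : ℕ, F (x + c * (i + 1) - δ)) * f x = 0 := by
    intro x
    rcases (hf x).eq_or_lt with h | h
    · rw [← h, mul_zero]
    have hF : F (x + c * ((0 : ℕ) + 1) - δ) = 0 := by
      refine cdf_eq_zero hf hsupp hcdf (le_of_lt ?_)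
      convert coe_sub_lt_of_sub_le_coe hle ((hsupp x).1 h).2 using 2
      push_cast
      ring
    rw [tprod_of_exists_eq_zero ⟨0, hF⟩, zero_mul]
  simp only [pdelta, hzero, integral_zero]

end Pdelta

theorem stmt1_general (F f : ℝ → ℝ) (xm xp : EReal) (hx : xm < xp)
    (hf : ∀ x, 0 ≤ f x)
    (hsupp : ∀ x : ℝ, 0 < f x ↔ (xm < (x : EReal) ∧ (x : EReal) < xp))
    (hcdf : ∀ x, F x = ∫ t in Iic x, f t)
    (hprob : ∫ x : ℝ, f x = 1)
    (c δ : ℝ) (hc : 0 < c) :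
    (IntegrableOn (fun x => x * f x) (Ioi (0 : ℝ)) ∧ ((δ - c : ℝ) : EReal) < xp - xm →
      0 < pdelta F f c δ) ∧
    (xp - xm ≤ ((δ - c : ℝ) : EReal) → pdelta F f c δ = 0) :=
  ⟨fun ⟨hmom, hlt⟩ => pdelta_pos hx hf hsupp hcdf hprob hc hmom hlt,
    pdelta_eq_zero hf hsupp hcdf⟩

/-- For `c > 0`: if `μ⁺ < ∞` and `x₊ − x₋ > δ − c` then `p_δ(c) > 0`; conversely if
`x₊ − x₋ ≤ δ − c` then `p_δ(c) = 0`. -/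
theorem stmt1 (F f : ℝ → ℝ) (xm xp : EReal) (hx : xm < xp)
    (hf : ∀ x, 0 ≤ f x) (hfm : Measurable f)
    (hsupp : ∀ x : ℝ, 0 < f x ↔ (xm < (x : EReal) ∧ (x : EReal) < xp))
    (hcdf : ∀ x, F x = ∫ t in Iic x, f t)
    (hprob : ∫ x : ℝ, f x = 1)
    (c δ : ℝ) (hc : 0 < c) :
    (IntegrableOn (fun x => x * f x) (Ioi (0 : ℝ)) ∧ ((δ - c : ℝ) : EReal) < xp - xm →
      0 < pdelta F f c δ) ∧
    (xp - xm ≤ ((δ - c : ℝ) : EReal) → pdelta F f c δ = 0) :=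
  stmt1_general F f xm xp hx hf hsupp hcdf hprob c δ hc
end

section
/- For c > 0 and μ⁺ < ∞, the infinite product ∏_{i=1}^∞ F(x+ci−δ), viewed as a function of c, is continuous at every c ≠ 0, for every x in (x_-, x_+) with x ≠ x_- + δ − c. -/
/-!
For `c < 0` the arguments `x + c (i + 1) - δ` tend to `-∞`, so the factors tend to `0` and the
product vanishes identically near `c`. For `c > 0` the defects `1 - F y = ∫_{y}^∞ f` are summable
along an arithmetic progression of step `c/2`: the stop-loss transform `S y = ∫ (t - y)⁺ f t`,
finite because `μ⁺ < ∞`, drops by at least `(c/2) (1 - F (y + c/2))` over `[y, y + c/2]`, so the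
partial sums telescope below `S (x - δ) / (c/2)`. By monotonicity of `F` these defects dominate the
factors for every `c' > c/2`, and the Weierstrass test for products gives locally uniform
convergence of continuous partial products on `(c/2, ∞)`.
-/

open MeasureTheory Set Filter Topology

section Tail

variable {f : ℝ → ℝ}

lemma integrable_max_sub_mul (hf : Integrable f)
    (hmu : IntegrableOn (fun t => t * f t) (Ioi 0)) (y : ℝ) :
    Integrable fun t => max (t - y) 0 * f t := by
  have hbound : Integrable fun t => (Ioi 0).indicator (fun t => |t * f t|) t + |y| * |f t| :=
    ((integrable_indicator_iff measurableSet_Ioi).2 hmu.abs).add (hf.abs.const_mul _)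
  refine hbound.mono' ((by fun_prop : Continuous fun t => max (t - y) 0).aestronglyMeasurable.mul
    hf.aestronglyMeasurable) (Eventually.of_forall fun t => ?_)
  rw [norm_mul, Real.norm_of_nonneg (le_max_right _ _), Real.norm_eq_abs]
  have hy := neg_abs_le y
  rcases le_or_gt t 0 with ht | ht
  · rw [indicator_of_notMem (show t ∉ Ioi 0 from not_lt.2 ht), zero_add]
    exact mul_le_mul_of_nonneg_right (max_le (by linarith) (abs_nonneg y)) (abs_nonneg _)
  · rw [indicator_of_mem (mem_Ioi.2 ht), abs_mul, abs_of_pos ht, ← add_mul]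
    exact mul_le_mul_of_nonneg_right (max_le (by linarith) (by positivity)) (abs_nonneg _)

lemma mul_setIntegral_Ioi_add_le (hf0 : ∀ t, 0 ≤ f t) (hf : Integrable f)
    (hmu : IntegrableOn (fun t => t * f t) (Ioi 0)) {c : ℝ} (hc : 0 ≤ c) (y : ℝ) :
    c * ∫ t in Ioi (y + c), f t ≤
      (∫ t, max (t - y) 0 * f t) - ∫ t, max (t - (y + c)) 0 * f t := by
  rw [← integral_const_mul, ← integral_indicator measurableSet_Ioi,
    ← integral_sub (integrable_max_sub_mul hf hmu _) (integrable_max_sub_mul hf hmu _)]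
  refine integral_mono ((hf.const_mul c).indicator measurableSet_Ioi)
    ((integrable_max_sub_mul hf hmu _).sub (integrable_max_sub_mul hf hmu _)) fun t => ?_
  by_cases ht : t ∈ Ioi (y + c)
  · have ht' : y + c < t := ht
    rw [indicator_of_mem ht, max_eq_left (by linarith), max_eq_left (by linarith)]
    exact le_of_eq (by ring)
  · rw [indicator_of_notMem ht, ← sub_mul]
    exact mul_nonneg (sub_nonneg.2 (max_le_max (by linarith) le_rfl)) (hf0 t)

lemma summable_setIntegral_Ioi_add_mul (hf0 : ∀ t, 0 ≤ f t) (hf : Integrable f)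
    (hmu : IntegrableOn (fun t => t * f t) (Ioi 0)) (a : ℝ) {c : ℝ} (hc : 0 < c) :
    Summable fun n : ℕ => ∫ t in Ioi (a + c * (n + 1)), f t := by
  set S : ℝ → ℝ := fun y => ∫ t, max (t - y) 0 * f t
  have hS0 : ∀ y, 0 ≤ S y := fun y => integral_nonneg fun t => mul_nonneg (le_max_right _ _) (hf0 t)
  have htelescope : ∀ N : ℕ, c * ∑ n ∈ Finset.range N, ∫ t in Ioi (a + c * (n + 1)), f t ≤
      S a - S (a + c * N) := by
    intro N
    induction N with
    | zero => simp
    | succ N ih =>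
      have hstep := mul_setIntegral_Ioi_add_le hf0 hf hmu hc.le (a + c * N)
      rw [add_assoc, ← mul_add_one] at hstep
      rw [Finset.sum_range_succ, mul_add]
      push_cast
      linarith
  refine summable_of_sum_range_le (c := S a / c)
    (fun n => setIntegral_nonneg measurableSet_Ioi fun t _ => hf0 t) fun N => ?_
  rw [le_div_iff₀' hc]
  linarith [htelescope N, hS0 (a + c * N)]

lemma continuous_integral_Iic (hf : Integrable f) : Continuous fun y => ∫ t in Iic y, f t :=
  continuous_iff_continuousAt.2 fun y =>
    (hf.integrableOn.continuousOn_Iic_primitive_Iic (a₀ := y + 1)).continuousAt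
      (Iic_mem_nhds (lt_add_one y))

lemma monotone_integral_Iic (hf0 : ∀ t, 0 ≤ f t) (hf : Integrable f) :
    Monotone fun y => ∫ t in Iic y, f t := fun _ _ hyz =>
  setIntegral_mono_set hf.integrableOn (Eventually.of_forall hf0)
    (Iic_subset_Iic.2 hyz).eventuallyLE

end Tail

section InfiniteProduct

lemma hasProd_zero_of_tendsto_zero {ι : Type*} {l : Filter ι} [l.NeBot] {g : ι → ℝ}
    (h0 : ∀ i, 0 ≤ g i) (h1 : ∀ i, g i ≤ 1) (hg : Tendsto g l (𝓝 0)) : HasProd g 0 := by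
  refine tendsto_order.2 ⟨fun b hb => Eventually.of_forall fun s =>
    hb.trans_le (Finset.prod_nonneg fun i _ => h0 i), fun ε hε => ?_⟩
  obtain ⟨i, hi⟩ := (hg.eventually (gt_mem_nhds hε)).exists
  filter_upwards [eventually_ge_atTop {i}] with s hs
  exact (Finset.prod_anti_set_of_le_one h0 h1 hs).trans_lt (by simpa using hi)

variable {G : ℝ → ℝ}

lemma tprod_comp_add_mul_eq_zero (h0 : ∀ y, 0 ≤ G y) (h1 : ∀ y, G y ≤ 1)
    (hG : Tendsto G atBot (𝓝 0)) (a : ℝ) {c : ℝ} (hc : c < 0) :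
    ∏' n : ℕ, G (a + c * (n + 1)) = 0 := by
  have harg : Tendsto (fun n : ℕ => a + c * (n + 1)) atTop atBot :=
    tendsto_atBot_add_const_left _ a
      ((tendsto_natCast_atTop_atTop.atTop_add tendsto_const_nhds).const_mul_atTop_of_neg hc)
  exact (hasProd_zero_of_tendsto_zero (fun n => h0 _) (fun n => h1 _) (hG.comp harg)).tprod_eq

lemma continuousOn_tprod_comp_add_mul (hG : Continuous G) (hmono : Monotone G)
    (h1 : ∀ y, G y ≤ 1) (a c₀ : ℝ) (hsum : Summable fun n : ℕ => 1 - G (a + c₀ * (n + 1))) :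
    ContinuousOn (fun c => ∏' n : ℕ, G (a + c * (n + 1))) (Ioi c₀) := by
  have hbound : ∀ n : ℕ, ∀ c ∈ Ioi c₀,
      ‖G (a + c * (n + 1)) - 1‖ ≤ 1 - G (a + c₀ * (n + 1)) := fun n c hc => by
    have hc' : c₀ < c := hc
    have harg : a + c₀ * (n + 1) ≤ a + c * (n + 1) := by gcongr
    rw [Real.norm_of_nonpos (sub_nonpos.2 (h1 _)), neg_sub]
    linarith [hmono harg]
  have hprod := Summable.hasProdLocallyUniformlyOn_nat_one_add (K := Ioi c₀)
    (f := fun n c => G (a + c * (n + 1)) - 1) isOpen_Ioi hsum (Eventually.of_forall hbound)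
    fun n => by fun_prop
  simp only [add_sub_cancel] at hprod
  exact hprod.tendstoLocallyUniformlyOn_finsetRange.continuousOn
    (Eventually.of_forall fun N => by fun_prop).frequently

end InfiniteProduct

theorem stmt3_general (F f : ℝ → ℝ)
    (hf : ∀ x, 0 ≤ f x)
    (hcdf : ∀ x, F x = ∫ t in Iic x, f t)
    (hprob : ∫ x : ℝ, f x = 1)
    (hmu : IntegrableOn (fun x => x * f x) (Ioi (0 : ℝ)))
    (δ c x : ℝ) (hc : c ≠ 0) :
    ContinuousAt (fun c' : ℝ => ∏' i : ℕ, F (x + c' * (i + 1) - δ)) c := by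
  have hfi : Integrable f := .of_integral_ne_zero (by rw [hprob]; exact one_ne_zero)
  obtain rfl : F = fun y => ∫ t in Iic y, f t := funext hcdf
  have htail : ∀ y, 1 - ∫ t in Iic y, f t = ∫ t in Ioi y, f t := fun y => by
    rw [← hprob, ← intervalIntegral.integral_Iic_add_Ioi hfi.integrableOn hfi.integrableOn,
      add_sub_cancel_left]
  have hF1 : ∀ y, ∫ t in Iic y, f t ≤ 1 := fun y =>
    sub_nonneg.1 ((htail y).symm ▸ setIntegral_nonneg measurableSet_Ioi fun t _ => hf t)
  simp_rw [add_sub_right_comm x _ δ]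
  rcases hc.lt_or_gt with hneg | hpos
  · have hzero : ∀ᶠ c' in 𝓝 c, ∏' i : ℕ, ∫ t in Iic (x - δ + c' * (i + 1)), f t = 0 :=
      (eventually_lt_nhds hneg).mono fun c' hc' => tprod_comp_add_mul_eq_zero
        (fun y => setIntegral_nonneg measurableSet_Iic fun t _ => hf t) hF1
        (tendsto_integral_Iic_zero tendsto_id) _ hc'
    exact continuousAt_const.congr (hzero.mono fun _ h => h.symm)
  · have hsum : Summable fun n : ℕ => 1 - ∫ t in Iic (x - δ + c / 2 * (n + 1)), f t := by
      simpa only [htail] using summable_setIntegral_Ioi_add_mul hf hfi hmu (x - δ) (half_pos hpos)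
    exact (continuousOn_tprod_comp_add_mul (continuous_integral_Iic hfi)
      (monotone_integral_Iic hf hfi) hF1 _ _ hsum).continuousAt (Ioi_mem_nhds (half_lt_self hpos))

/-- If `μ⁺ < ∞`, the infinite product `∏_{i=1}^∞ F(x + c i − δ)`, as a function of the
trend `c`, is continuous at every `c ≠ 0`, for every `x ∈ (x₋, x₊)` with `x ≠ x₋ + δ − c`. -/
theorem stmt3 (F f : ℝ → ℝ) (xm xp : EReal) (hx : xm < xp)
    (hf : ∀ x, 0 ≤ f x) (hfm : Measurable f)
    (hsupp : ∀ x : ℝ, 0 < f x ↔ (xm < (x : EReal) ∧ (x : EReal) < xp))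
    (hcdf : ∀ x, F x = ∫ t in Iic x, f t)
    (hprob : ∫ x : ℝ, f x = 1)
    (hmu : IntegrableOn (fun x => x * f x) (Ioi (0 : ℝ)))
    (δ c x : ℝ) (hc : c ≠ 0)
    (hx1 : xm < (x : EReal)) (hx2 : (x : EReal) < xp)
    (hne : (x : EReal) ≠ xm + (δ : EReal) - (c : EReal)) :
    ContinuousAt (fun c' : ℝ => ∏' i : ℕ, F (x + c' * (i + 1) - δ)) c :=
  stmt3_general F f hf hcdf hprob hmu δ c x hc
end

section
/- The asymptotic δ-record probability p_δ(c) is right-continuous at c = 0, i.e. lim_{c→0⁺} p_δ(c) = 1 − F(x_+ + δ), assuming μ⁺ < ∞. -/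
/-!
As `c ↓ 0` the integrand `(∏ᵢ F (x + c (i + 1) - δ)) f x` converges pointwise. If `x - δ > x₊`
every factor is `1`. If `x - δ < b < x₊`, then `F b < 1` and the first `⌊(b - x + δ) / c⌋`
factors are at most `F b`, so the product tends to `0`. The products lie in `[0, 1]`, so
dominated convergence with dominating function `f` gives the limit `∫_{x > x₊ + δ} f`; the one
remaining point `x = x₊ + δ` is null.
-/

open MeasureTheory Set

open Filter Topology

section UnitIntervalProducts

variable {ι : Type*} {g : ι → ℝ}

theorem hasProd_iInf_of_nonneg_of_le_one (h0 : ∀ i, 0 ≤ g i) (h1 : ∀ i, g i ≤ 1) :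
    HasProd g (⨅ s : Finset ι, ∏ i ∈ s, g i) :=
  tendsto_atTop_ciInf (Finset.prod_anti_set_of_le_one h0 h1)
    ⟨0, by rintro _ ⟨s, rfl⟩; exact Finset.prod_nonneg fun i _ => h0 i⟩

theorem tprod_le_prod_of_nonneg_of_le_one (h0 : ∀ i, 0 ≤ g i) (h1 : ∀ i, g i ≤ 1)
    (s : Finset ι) : ∏' i, g i ≤ ∏ i ∈ s, g i :=
  (Finset.prod_anti_set_of_le_one h0 h1).le_of_tendsto
    (hasProd_iInf_of_nonneg_of_le_one h0 h1).multipliable.hasProd s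

theorem tprod_le_one_of_nonneg_of_le_one (h0 : ∀ i, 0 ≤ g i) (h1 : ∀ i, g i ≤ 1) :
    ∏' i, g i ≤ 1 := by
  simpa using tprod_le_prod_of_nonneg_of_le_one h0 h1 ∅

end UnitIntervalProducts

section ShiftedProducts

variable {F : ℝ → ℝ} (hF0 : ∀ y, 0 ≤ F y) (hF1 : ∀ y, F y ≤ 1) (hmono : Monotone F)
include hF0 hF1 hmono

theorem tprod_shift_le_pow {c : ℝ} (hc : 0 < c) (y b : ℝ) :
    ∏' i : ℕ, F (y + c * (i + 1)) ≤ F b ^ ⌊(b - y) / c⌋₊ := by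
  calc ∏' i : ℕ, F (y + c * (i + 1))
      ≤ ∏ i ∈ Finset.range ⌊(b - y) / c⌋₊, F (y + c * (i + 1)) :=
        tprod_le_prod_of_nonneg_of_le_one (fun _ => hF0 _) (fun _ => hF1 _) _
    _ ≤ ∏ _i ∈ Finset.range ⌊(b - y) / c⌋₊, F b := by
        refine Finset.prod_le_prod (fun _ _ => hF0 _) fun i hi => hmono ?_
        have hle : ((i + 1 : ℕ) : ℝ) ≤ (b - y) / c :=
          (Nat.le_floor_iff' (Nat.succ_ne_zero i)).1 (Finset.mem_range.1 hi)
        rw [le_div_iff₀ hc] at hle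
        push_cast at hle
        linarith
    _ = F b ^ ⌊(b - y) / c⌋₊ := by rw [Finset.prod_const, Finset.card_range]

theorem tendsto_tprod_shift_nhdsGT_zero {y b : ℝ} (hyb : y < b) (hb : F b < 1) :
    Tendsto (fun c => ∏' i : ℕ, F (y + c * (i + 1))) (𝓝[>] 0) (𝓝 0) := by
  have hpow : Tendsto (fun c : ℝ => F b ^ ⌊(b - y) / c⌋₊) (𝓝[>] 0) (𝓝 0) := by
    refine (tendsto_pow_atTop_nhds_zero_of_lt_one (hF0 b) hb).comp
      (tendsto_nat_floor_atTop.comp ?_)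
    exact (tendsto_inv_nhdsGT_zero.const_mul_atTop (sub_pos.2 hyb)).congr fun c =>
      (div_eq_mul_inv _ _).symm
  refine tendsto_of_tendsto_of_tendsto_of_le_of_le' tendsto_const_nhds hpow ?_ ?_
  · exact Eventually.of_forall fun c => tprod_nonneg fun i => hF0 _
  · exact eventually_nhdsWithin_of_forall fun c hc => tprod_shift_le_pow hF0 hF1 hmono hc y b

end ShiftedProducts

section Pointwise

variable {F : ℝ → ℝ} {a : EReal} (hF0 : ∀ y, 0 ≤ F y) (hF1 : ∀ y, F y ≤ 1) (hmono : Monotone F)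
  (hF_eq_one : ∀ y : ℝ, a < y → F y = 1) (hF_lt_one : ∀ y : ℝ, (y : EReal) < a → F y < 1)
include hF0 hF1 hmono hF_eq_one hF_lt_one

theorem tendsto_tprod_shift_indicator {x δ : ℝ} (hx : (x : EReal) ≠ a + δ) :
    Tendsto (fun c => ∏' i : ℕ, F (x + c * (i + 1) - δ)) (𝓝[>] 0)
      (𝓝 ({x : ℝ | a + δ < x}.indicator 1 x)) := by
  simp_rw [add_sub_right_comm x]
  rcases hx.lt_or_gt with hlt | hgt
  · rw [indicator_of_notMem (show x ∉ {x : ℝ | a + δ < x} from lt_asymm hlt)]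
    obtain ⟨b, hxb, hba⟩ : ∃ b : ℝ, ((x - δ : ℝ) : EReal) < b ∧ (b : EReal) < a :=
      EReal.exists_between_coe_real (by
        rw [EReal.coe_sub]; exact (EReal.sub_lt_iff (by simp) (by simp)).2 hlt)
    exact tendsto_tprod_shift_nhdsGT_zero hF0 hF1 hmono (EReal.coe_lt_coe_iff.1 hxb)
      (hF_lt_one b hba)
  · rw [indicator_of_mem (show x ∈ {x : ℝ | a + δ < x} from hgt), Pi.one_apply]
    have hxδ : a < ((x - δ : ℝ) : EReal) := by
      rw [EReal.coe_sub]; exact (EReal.lt_sub_iff_add_lt (by simp) (by simp)).2 hgt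
    refine tendsto_const_nhds.congr' (eventually_nhdsWithin_of_forall fun c (hc : 0 < c) => ?_)
    have hone : ∀ i : ℕ, F (x - δ + c * (i + 1)) = 1 := fun i =>
      hF_eq_one _ (hxδ.trans (EReal.coe_lt_coe_iff.2 (by
        have : 0 < c * ((i : ℝ) + 1) := by positivity
        linarith)))
    simp only [tprod_congr hone, tprod_one]

theorem tendsto_pdelta_nhdsGT_zero {f : ℝ → ℝ} (hfi : Integrable f) (δ : ℝ) :
    Tendsto (fun c => pdelta F f c δ) (𝓝[>] 0) (𝓝 (∫ x in {x : ℝ | a + δ < x}, f x)) := by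
  rw [← integral_indicator (s := {x : ℝ | a + δ < x})
    (measurable_coe_real_ereal measurableSet_Ioi)]
  refine tendsto_integral_filter_of_dominated_convergence (fun x => ‖f x‖) ?_ ?_ hfi.norm ?_
  · refine Eventually.of_forall fun c => ?_
    exact (Measurable.tprod fun i => hmono.measurable.comp (by fun_prop)).aestronglyMeasurable.mul
      hfi.aestronglyMeasurable
  · refine Eventually.of_forall fun c => Eventually.of_forall fun x => ?_
    rw [norm_mul, Real.norm_of_nonneg (tprod_nonneg fun i => hF0 _)]
    exact mul_le_of_le_one_left (norm_nonneg _)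
      (tprod_le_one_of_nonneg_of_le_one (fun i => hF0 _) (fun i => hF1 _))
  have hae : ∀ᵐ x : ℝ, (x : EReal) ≠ a + δ := by
    refine ae_iff.2 (Set.Subsingleton.measure_zero (fun x hx y hy => ?_) _)
    simp only [ne_eq, not_not, mem_ofPred_eq] at hx hy
    exact EReal.coe_injective (hx.trans hy.symm)
  filter_upwards [hae] with x hx
  simpa only [← indicator_mul_left, Pi.one_apply, one_mul] using
    (tendsto_tprod_shift_indicator hF0 hF1 hmono hF_eq_one hF_lt_one hx).mul_const (f x)

end Pointwise

section Density

variable {f : ℝ → ℝ}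

theorem monotone_setIntegral_Iic (hf : ∀ x, 0 ≤ f x) (hfi : Integrable f) :
    Monotone fun x => ∫ t in Iic x, f t := fun _ _ hab =>
  setIntegral_mono_set hfi.integrableOn (.of_forall hf) (Iic_subset_Iic.2 hab).eventuallyLE

theorem setIntegral_Iic_eq_integral_of_eq_zero {y : ℝ} (h : ∀ t, y < t → f t = 0) :
    ∫ t in Iic y, f t = ∫ t, f t :=
  setIntegral_eq_integral_of_forall_compl_eq_zero fun t ht => h t (not_le.1 ht)

theorem setIntegral_Iic_lt_integral (hf : ∀ x, 0 ≤ f x) (hfi : Integrable f) {b u v : ℝ}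
    (hbu : b ≤ u) (huv : u < v) (hpos : ∀ t ∈ Ioo u v, 0 < f t) :
    ∫ t in Iic b, f t < ∫ t, f t := by
  have htail : 0 < ∫ t in Ioi b, f t := by
    rw [setIntegral_pos_iff_support_of_nonneg_ae (.of_forall hf) hfi.integrableOn]
    refine (measure_mono (show Ioo u v ⊆ Function.support f ∩ Ioi b from
      fun t ht => ⟨(hpos t ht).ne', hbu.trans_lt ht.1⟩)).trans_lt' ?_
    simpa [Real.volume_Ioo] using huv
  rw [← integral_add_compl measurableSet_Iic hfi, compl_Iic]
  linarith

end Density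

theorem stmt4_general (F f : ℝ → ℝ) (xm xp : EReal) (hx : xm < xp)
    (hf : ∀ x, 0 ≤ f x)
    (hsupp : ∀ x : ℝ, 0 < f x ↔ (xm < (x : EReal) ∧ (x : EReal) < xp))
    (hcdf : ∀ x, F x = ∫ t in Iic x, f t)
    (hprob : ∫ x : ℝ, f x = 1)
    (δ : ℝ) :
    Filter.Tendsto (fun c : ℝ => pdelta F f c δ) (nhdsWithin 0 (Ioi 0))
      (nhds (∫ x in {x : ℝ | xp + (δ : EReal) < (x : EReal)}, f x)) := by
  have hfi : Integrable f := .of_integral_ne_zero (by simp [hprob])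
  obtain rfl : F = fun x => ∫ t in Iic x, f t := funext hcdf
  refine tendsto_pdelta_nhdsGT_zero (fun _ => setIntegral_nonneg measurableSet_Iic fun t _ => hf t)
    (fun _ => hprob ▸ setIntegral_le_integral hfi (.of_forall hf))
    (monotone_setIntegral_Iic hf hfi) (fun y hy => ?_) (fun b hb => ?_) hfi δ
  · rw [← hprob]
    refine setIntegral_Iic_eq_integral_of_eq_zero fun t hyt => (hf t).eq_of_not_lt' fun hpos => ?_
    exact lt_asymm ((hsupp t).1 hpos).2 (hy.trans (EReal.coe_lt_coe_iff.2 hyt))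
  · obtain ⟨u, hu, huxp⟩ := EReal.exists_between_coe_real (max_lt hx hb)
    obtain ⟨v, huv, hvxp⟩ := EReal.exists_between_coe_real huxp
    rw [← hprob]
    refine setIntegral_Iic_lt_integral hf hfi
      (EReal.coe_le_coe_iff.1 ((le_max_right _ _).trans hu.le)) (EReal.coe_lt_coe_iff.1 huv)
      fun t ht => (hsupp t).2 ⟨?_, ?_⟩
    · exact (le_max_left _ _).trans_lt (hu.trans (EReal.coe_lt_coe_iff.2 ht.1))
    · exact (EReal.coe_lt_coe_iff.2 ht.2).trans hvxp

/-- If `μ⁺ < ∞`, the asymptotic δ-record probability is right-continuous at `c = 0`: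
`lim_{c→0⁺} p_δ(c) = 1 − F(x₊ + δ)` (expressed as the tail mass of `f` beyond `x₊ + δ`). -/
theorem stmt4 (F f : ℝ → ℝ) (xm xp : EReal) (hx : xm < xp)
    (hf : ∀ x, 0 ≤ f x) (hfm : Measurable f)
    (hsupp : ∀ x : ℝ, 0 < f x ↔ (xm < (x : EReal) ∧ (x : EReal) < xp))
    (hcdf : ∀ x, F x = ∫ t in Iic x, f t)
    (hprob : ∫ x : ℝ, f x = 1)
    (hmu : IntegrableOn (fun x => x * f x) (Ioi (0 : ℝ)))
    (δ : ℝ) :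
    Filter.Tendsto (fun c : ℝ => pdelta F f c δ) (nhdsWithin 0 (Ioi 0))
      (nhds (∫ x in {x : ℝ | xp + (δ : EReal) < (x : EReal)}, f x)) :=
  stmt4_general F f xm xp hx hf hsupp hcdf hprob δ
end

section
/- Let F(x) = exp(−exp(−x)) be the Gumbel cdf and c ≠ 0. Then the probability that the n-th observation of Y_j = X_j + cj is a δ-record equals (1 − e^{−c}) / (1 − e^{−c} + e^{δ}(e^{−c} − e^{−nc})). -/
open MeasureTheory Set Real

/-!
Write `u = e^{-x}`. Each factor `F(x + ci - δ)` equals `exp (-e^{δ - ci} u)`, so the integrand is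
`e^{-x} exp (-(S + 1) u)` with `S = ∑_{i=1}^{n-1} e^{δ - ci}`. The substitution `u = e^{-x}` maps
`ℝ` onto `(0, ∞)` and turns the integral into `∫_0^∞ e^{-(S+1)u} du = 1 / (S + 1)`; summing the
geometric series gives `S (1 - e^{-c}) = e^δ (e^{-c} - e^{-nc})`.
-/

section ExpSubstitution

variable {E : Type*} [NormedAddCommGroup E] [NormedSpace ℝ E]

theorem integral_exp_smul_comp_exp (g : ℝ → E) :
    ∫ x, exp x • g (exp x) = ∫ y in Ioi 0, g y := by
  rw [← range_exp, ← image_univ, integral_image_eq_integral_abs_deriv_smul MeasurableSet.univ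
    (fun x _ => (hasDerivAt_exp x).hasDerivWithinAt) exp_injective.injOn]
  simp [abs_of_pos (exp_pos _)]

theorem integral_exp_neg_smul_comp_exp_neg (g : ℝ → E) :
    ∫ x, exp (-x) • g (exp (-x)) = ∫ y in Ioi 0, g y := by
  rw [integral_neg_eq_self (fun x => exp x • g (exp x)), integral_exp_smul_comp_exp]

end ExpSubstitution

theorem integral_exp_neg_mul_exp_neg_mul_exp_neg {b : ℝ} (hb : 0 < b) :
    ∫ x, exp (-x) * exp (-(b * exp (-x))) = b⁻¹ := by
  have h := integral_exp_neg_smul_comp_exp_neg (fun u => exp (-b * u))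
  simp only [smul_eq_mul, neg_mul] at h
  rw [h]
  simpa [neg_div_neg_eq] using integral_exp_mul_Ioi (neg_neg_of_pos hb) 0

theorem prod_exp_neg_exp_neg_add {ι : Type*} (s : Finset ι) (a : ι → ℝ) (x : ℝ) :
    ∏ i ∈ s, exp (-exp (-(x + a i))) = exp (-((∑ i ∈ s, exp (-a i)) * exp (-x))) := by
  rw [← exp_sum, Finset.sum_mul, ← Finset.sum_neg_distrib]
  refine congrArg exp (Finset.sum_congr rfl fun i _ => ?_)
  rw [← exp_add, neg_add, add_comm]

theorem sum_exp_neg_mul_succ_sub_mul (c δ : ℝ) (m : ℕ) :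
    (∑ i ∈ Finset.range m, exp (-(c * (i + 1) - δ))) * (1 - exp (-c))
      = exp δ * (exp (-c) - exp (-((m + 1 : ℕ) : ℝ) * c)) := by
  have hterm (i : ℕ) : exp (-(c * (i + 1) - δ)) = exp δ * exp (-c) * exp (-c) ^ i := by
    rw [← exp_nat_mul, ← exp_add, ← exp_add]
    ring_nf
  have hpow : exp (-c) * exp (-c) ^ m = exp (-((m + 1 : ℕ) : ℝ) * c) := by
    rw [← pow_succ', ← exp_nat_mul]
    ring_nf
  simp_rw [hterm, ← Finset.mul_sum, mul_assoc, geom_sum_mul_neg, ← hpow]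
  ring

/-- Gumbel LDM: for `c ≠ 0`, the probability that the `n`-th observation is a δ-record is
`p_{n,δ}(c) = (1 − e^{−c}) / (1 − e^{−c} + e^{δ}(e^{−c} − e^{−nc}))`. -/
theorem stmt7 (c δ : ℝ) (hc : c ≠ 0) (n : ℕ) (hn : 1 ≤ n) :
    (∫ x : ℝ, (∏ i ∈ Finset.range (n - 1), exp (-exp (-(x + c * (i + 1) - δ)))) *
        (exp (-x) * exp (-exp (-x))))
      = (1 - exp (-c)) / (1 - exp (-c) + exp δ * (exp (-c) - exp (-(n : ℝ) * c))) := by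
  obtain ⟨m, rfl⟩ := Nat.exists_eq_add_of_le' hn
  set S := ∑ i ∈ Finset.range m, exp (-(c * (i + 1) - δ))
  have hintegrand (x : ℝ) :
      (∏ i ∈ Finset.range m, exp (-exp (-(x + c * (i + 1) - δ)))) *
        (exp (-x) * exp (-exp (-x))) = exp (-x) * exp (-((S + 1) * exp (-x))) := by
    simp_rw [add_sub_assoc, prod_exp_neg_exp_neg_add, add_mul, one_mul, neg_add, exp_add]
    ring
  have hgeom : 1 - exp (-c) ≠ 0 := by
    simpa [sub_eq_zero, eq_comm (a := (1 : ℝ)), exp_eq_one_iff] using hc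
  have hden : 1 - exp (-c) + exp δ * (exp (-c) - exp (-((m + 1 : ℕ) : ℝ) * c))
      = (S + 1) * (1 - exp (-c)) := by
    rw [← sum_exp_neg_mul_succ_sub_mul]
    ring
  rw [Nat.add_sub_cancel, funext hintegrand,
    integral_exp_neg_mul_exp_neg_mul_exp_neg (by positivity), hden, div_mul_cancel_right₀ hgeom]
end

section
/- Let F be the Dagum cdf with a = 1: F(x) = (1 + b/x)^{−q} for x ≥ 0, and take trend c = b and δ = 0. Then the record probability for the n-th observation equals q n^{−q} ∫_0^1 t^{q−1}(1 − t(n−1)/n)^{−q} dt = q (n−1)^{−q} ∫_1^n (y−1)^{q−1}/y dy. -/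
open MeasureTheory Set Real

/-!
The product of the shifted cdfs telescopes: `∏_{i<n-1} F(x + b(i+1)) = ((x + b)/(x + bn))^q`.
Substituting `t = x/(x + b)`, so that `F(x) = t^q` and `f(x) dx = q t^(q-1) dt`, gives the first
form; the Möbius substitution `t = n(y-1)/((n-1)y)`, under which `1 - t(n-1)/n = 1/y`, gives the
second.
-/

theorem prod_range_rpow_div_add_eq {x b : ℝ} (hx : 0 < x) (hb : 0 ≤ b) (q : ℝ) (m : ℕ) :
    ∏ i ∈ Finset.range m, ((x + b * (i + 1)) / (x + b * (i + 1) + b)) ^ q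
      = ((x + b) / (x + b * (m + 1))) ^ q := by
  rw [Real.finsetProd_rpow _ _ (fun i _ => by positivity)]
  congr 1
  induction m with
  | zero => simp [div_self (by positivity : x + b ≠ 0)]
  | succ m ih =>
    rw [Finset.prod_range_succ, ih]
    have : x + b * (m + 1) ≠ 0 := by positivity
    field_simp
    push_cast
    ring

section ChangeOfVariables

variable {E : Type*} [NormedAddCommGroup E] [NormedSpace ℝ E]

theorem integral_Ioi_zero_eq_integral_Ioo_zero_one {b : ℝ} (hb : 0 < b) (f : ℝ → E) :
    ∫ x in Ioi 0, f x = ∫ t in Ioo 0 1, (b / (1 - t) ^ 2) • f (b * t / (1 - t)) := by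
  have hmaps : MapsTo (fun t => b * t / (1 - t)) (Ioo 0 1) (Ioi 0) := by
    rintro t ⟨ht0, ht1⟩
    exact div_pos (mul_pos hb ht0) (sub_pos.2 ht1)
  have hsurj : SurjOn (fun t => b * t / (1 - t)) (Ioo 0 1) (Ioi 0) := by
    intro x (hx : 0 < x)
    refine ⟨x / (x + b), ⟨by positivity, (div_lt_one (by positivity)).2 (by linarith)⟩, ?_⟩
    field_simp [hb.ne']
    ring
  have hderiv : ∀ t ∈ Ioo (0 : ℝ) 1,
      HasDerivWithinAt (fun t => b * t / (1 - t)) (b / (1 - t) ^ 2) (Ioo 0 1) t := by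
    rintro t ⟨-, ht1⟩
    have ht : 1 - t ≠ 0 := (sub_pos.2 ht1).ne'
    refine (((hasDerivAt_id' t).const_mul b).div ((hasDerivAt_id' t).const_sub 1) ht).congr_deriv
      ?_ |>.hasDerivWithinAt
    field_simp
    ring
  have hmono : MonotoneOn (fun t => b * t / (1 - t)) (Ioo 0 1) := by
    rintro t ⟨-, ht1⟩ s ⟨-, hs1⟩ hts
    rw [div_le_div_iff₀ (sub_pos.2 ht1) (sub_pos.2 hs1)]
    nlinarith
  rw [← hsurj.image_eq_of_mapsTo hmaps,
    integral_image_eq_integral_deriv_smul_of_monotoneOn measurableSet_Ioo hderiv hmono]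

theorem integral_Ioo_zero_one_eq_integral_Ioo_one {c : ℝ} (hc : 1 < c) (f : ℝ → E) :
    ∫ t in Ioo 0 1, f t =
      ∫ y in Ioo 1 c, (c / ((c - 1) * y ^ 2)) • f (c * (y - 1) / ((c - 1) * y)) := by
  have hc1 : 0 < c - 1 := sub_pos.2 hc
  have hmaps : MapsTo (fun y => c * (y - 1) / ((c - 1) * y)) (Ioo 1 c) (Ioo 0 1) := by
    rintro y ⟨hy1, hyc⟩
    have hy0 : 0 < y := by linarith
    exact ⟨div_pos (by nlinarith) (by positivity),
      (div_lt_one (by positivity)).2 (by nlinarith)⟩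
  have hsurj : SurjOn (fun y => c * (y - 1) / ((c - 1) * y)) (Ioo 1 c) (Ioo 0 1) := by
    rintro t ⟨ht0, ht1⟩
    have hs : 0 < c - (c - 1) * t := by nlinarith
    have hlt : c < c * (c - (c - 1) * t) := by
      nlinarith [mul_pos (mul_pos (by linarith : 0 < c) hc1) (sub_pos.2 ht1)]
    refine ⟨c / (c - (c - 1) * t),
      ⟨(one_lt_div hs).2 (by nlinarith [mul_pos hc1 ht0]), (div_lt_iff₀ hs).2 hlt⟩, ?_⟩
    field_simp
    ring
  have hderiv : ∀ y ∈ Ioo (1 : ℝ) c, HasDerivWithinAt (fun y => c * (y - 1) / ((c - 1) * y))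
      (c / ((c - 1) * y ^ 2)) (Ioo 1 c) y := by
    rintro y ⟨hy1, -⟩
    have hy : (c - 1) * y ≠ 0 := by positivity
    refine ((((hasDerivAt_id' y).sub_const 1).const_mul c).div
      ((hasDerivAt_id' y).const_mul (c - 1)) hy).congr_deriv ?_ |>.hasDerivWithinAt
    field_simp
    ring
  have hmono : MonotoneOn (fun y => c * (y - 1) / ((c - 1) * y)) (Ioo 1 c) := by
    rintro y ⟨hy1, -⟩ z ⟨hz1, -⟩ hyz
    rw [div_le_div_iff₀ (by positivity) (by positivity)]
    nlinarith [mul_nonneg (mul_pos (by linarith : 0 < c) hc1).le (sub_nonneg.2 hyz)]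
  rw [← hsurj.image_eq_of_mapsTo hmaps,
    integral_image_eq_integral_deriv_smul_of_monotoneOn measurableSet_Ioo hderiv hmono]

end ChangeOfVariables

theorem dagum_integrand_comp_div_one_sub {b c t : ℝ} (hb : 0 < b) (hc : 0 < c)
    (ht : t ∈ Ioo (0 : ℝ) 1) (q : ℝ) :
    (b / (1 - t) ^ 2) • (((b * t / (1 - t) + b) / (b * t / (1 - t) + b * c)) ^ q *
      (q * (b * t / (1 - t) / (b * t / (1 - t) + b)) ^ (q - 1) *
        (b / (b * t / (1 - t) + b) ^ 2)))
      = q * c ^ (-q) * (t ^ (q - 1) * (1 - t * (c - 1) / c) ^ (-q)) := by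
  obtain ⟨ht0, ht1⟩ := ht
  have h1t : 0 < 1 - t := sub_pos.2 ht1
  have hs : 0 < 1 - t * (c - 1) / c := by
    rw [sub_pos, div_lt_one hc]; nlinarith
  have hxb : b * t / (1 - t) + b = b / (1 - t) := by field_simp; ring
  have hF : b * t / (1 - t) / (b * t / (1 - t) + b) = t := by
    rw [hxb]; field_simp
  have hcs : c * (1 - t * (c - 1) / c) = c - t * (c - 1) := by field_simp
  have hG : (b * t / (1 - t) + b) / (b * t / (1 - t) + b * c)
      = (c * (1 - t * (c - 1) / c))⁻¹ := by
    have : 0 < c - t * (c - 1) := by nlinarith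
    rw [hcs, hxb]
    field_simp
    ring
  rw [hF, hG, Real.inv_rpow (by positivity), ← Real.rpow_neg (by positivity),
    Real.mul_rpow hc.le hs.le, hxb, smul_eq_mul]
  field_simp

theorem beta_integrand_comp_sub_one_div {c y : ℝ} (hc : 1 < c) (hy : y ∈ Ioo 1 c) (q : ℝ) :
    (c / ((c - 1) * y ^ 2)) • ((c * (y - 1) / ((c - 1) * y)) ^ (q - 1) *
      (1 - c * (y - 1) / ((c - 1) * y) * (c - 1) / c) ^ (-q))
      = (c / (c - 1)) ^ q * ((y - 1) ^ (q - 1) / y) := by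
  obtain ⟨hy1, -⟩ := hy
  have hc1 : 0 < c - 1 := sub_pos.2 hc
  have hy0 : 0 < y := by linarith
  have hy1' : 0 < y - 1 := sub_pos.2 hy1
  have ht : c * (y - 1) / ((c - 1) * y) = c / (c - 1) * ((y - 1) / y) := by
    field_simp
  have hs : 1 - c * (y - 1) / ((c - 1) * y) * (c - 1) / c = y⁻¹ := by
    field_simp; ring
  rw [hs, ht, Real.mul_rpow (by positivity) (by positivity), Real.div_rpow hy1'.le hy0.le,
    Real.inv_rpow hy0.le, Real.rpow_neg hy0.le, inv_inv,
    Real.rpow_sub_one (by positivity : c / (c - 1) ≠ 0), Real.rpow_sub_one hy0.ne', smul_eq_mul]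
  have := Real.rpow_pos_of_pos hy0 q
  field_simp

theorem stmt10_general (b q : ℝ) (hb : 0 < b) (n : ℕ) (hn : 2 ≤ n) :
    (∫ x in Ioi (0 : ℝ),
        (∏ i ∈ Finset.range (n - 1),
          ((x + b * (i + 1)) / (x + b * (i + 1) + b)) ^ q) *
        (q * (x / (x + b)) ^ (q - 1) * (b / (x + b) ^ 2)))
      = q * (n : ℝ) ^ (-q) *
        ∫ t in Ioo (0 : ℝ) 1, t ^ (q - 1) * (1 - t * ((n : ℝ) - 1) / n) ^ (-q) ∧
    q * (n : ℝ) ^ (-q) *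
        (∫ t in Ioo (0 : ℝ) 1, t ^ (q - 1) * (1 - t * ((n : ℝ) - 1) / n) ^ (-q))
      = q * ((n : ℝ) - 1) ^ (-q) * ∫ y in Ioo (1 : ℝ) (n : ℝ), (y - 1) ^ (q - 1) / y := by
  have hn1 : (1 : ℝ) < n := by exact_mod_cast hn
  have hn0 : (0 : ℝ) < n := by linarith
  have hcast : ((n - 1 : ℕ) : ℝ) + 1 = n := by
    rw [Nat.cast_sub (by omega), Nat.cast_one, sub_add_cancel]
  constructor
  · rw [← integral_const_mul]
    calc _ = ∫ x in Ioi (0 : ℝ), ((x + b) / (x + b * n)) ^ q *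
            (q * (x / (x + b)) ^ (q - 1) * (b / (x + b) ^ 2)) := by
          refine setIntegral_congr_fun measurableSet_Ioi fun x (hx : 0 < x) => ?_
          rw [prod_range_rpow_div_add_eq hx hb.le, hcast]
      _ = _ := by
          rw [integral_Ioi_zero_eq_integral_Ioo_zero_one hb]
          exact setIntegral_congr_fun measurableSet_Ioo fun t ht =>
            dagum_integrand_comp_div_one_sub hb hn0 ht q
  · have hsub : ∫ t in Ioo (0 : ℝ) 1, t ^ (q - 1) * (1 - t * ((n : ℝ) - 1) / n) ^ (-q)
        = ((n : ℝ) / (n - 1)) ^ q * ∫ y in Ioo (1 : ℝ) n, (y - 1) ^ (q - 1) / y := by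
      rw [integral_Ioo_zero_one_eq_integral_Ioo_one hn1, ← integral_const_mul]
      exact setIntegral_congr_fun measurableSet_Ioo fun y hy =>
        beta_integrand_comp_sub_one_div hn1 hy q
    have hm : (0 : ℝ) < n - 1 := sub_pos.2 hn1
    rw [hsub, Real.div_rpow hn0.le hm.le, Real.rpow_neg hn0.le, Real.rpow_neg hm.le]
    have := Real.rpow_pos_of_pos hn0 q
    field_simp

/-- Dagum model with `a = 1`, trend `c = b`, `δ = 0`: the record probability of the `n`-th
observation equals `q n^{−q} ∫_0^1 t^{q−1}(1 − t(n−1)/n)^{−q} dt`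
and also `q (n−1)^{−q} ∫_1^n (y−1)^{q−1}/y dy`. Here `F(x) = (1 + b/x)^{−q} = (x/(x+b))^q`
with density `f(x) = q (x/(x+b))^{q−1} b/(x+b)²` on `x > 0`. -/
theorem stmt10 (b q : ℝ) (hb : 0 < b) (hq : 0 < q) (n : ℕ) (hn : 2 ≤ n) :
    (∫ x in Ioi (0 : ℝ),
        (∏ i ∈ Finset.range (n - 1),
          ((x + b * (i + 1)) / (x + b * (i + 1) + b)) ^ q) *
        (q * (x / (x + b)) ^ (q - 1) * (b / (x + b) ^ 2)))
      = q * (n : ℝ) ^ (-q) *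
        ∫ t in Ioo (0 : ℝ) 1, t ^ (q - 1) * (1 - t * ((n : ℝ) - 1) / n) ^ (-q) ∧
    q * (n : ℝ) ^ (-q) *
        (∫ t in Ioo (0 : ℝ) 1, t ^ (q - 1) * (1 - t * ((n : ℝ) - 1) / n) ^ (-q))
      = q * ((n : ℝ) - 1) ^ (-q) * ∫ y in Ioo (1 : ℝ) (n : ℝ), (y - 1) ^ (q - 1) / y :=
  stmt10_general b q hb n hn
end

section
/- In the Dagum model with a = 1, c = b and q = 1, the record probability satisfies p_{n,0} = log(n)/(n−1) exactly, for n ≥ 2. -/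
open MeasureTheory Set Real Filter Topology

/-! The product telescopes to `(x + b) / (x + b n)`, so the integrand is the rational function
`b / ((x + b) (x + b n))`, whose partial fractions `((x + b)⁻¹ - (x + b n)⁻¹) / (n - 1)` integrate
over `(0, ∞)` to `(log (b n) - log b) / (n - 1) = log n / (n - 1)`. -/

lemma Finset.prod_range_div_succ_of_ne_zero {K : Type*} [Field K] (f : ℕ → K)
    (hf : ∀ i, f i ≠ 0) (n : ℕ) :
    ∏ i ∈ Finset.range n, f i / f (i + 1) = f 0 / f n := by
  induction n with
  | zero => simp [div_self (hf 0)]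
  | succ n ih => rw [Finset.prod_range_succ, ih, div_mul_div_cancel₀ (hf n)]

lemma prod_range_add_mul_succ_div_add_mul_succ_add {K : Type*} [Field K] (x b : K)
    (hf : ∀ i : ℕ, x + b * (i + 1) ≠ 0) (m : ℕ) :
    ∏ i ∈ Finset.range m, (x + b * (i + 1)) / (x + b * (i + 1) + b)
      = (x + b) / (x + b * (m + 1)) := by
  convert Finset.prod_range_div_succ_of_ne_zero _ hf m using 2 with i
  · push_cast
    ring
  · simp

lemma tendsto_log_add_sub_log_add_atTop (a c : ℝ) :
    Tendsto (fun x : ℝ => log (x + a) - log (x + c)) atTop (𝓝 0) := by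
  simpa using (tendsto_log_comp_add_sub_log a).sub (tendsto_log_comp_add_sub_log c)

lemma integral_Ioi_inv_add_sub_inv_add {a c : ℝ} (ha : 0 < a) (hac : a ≤ c) :
    ∫ x in Ioi (0 : ℝ), ((x + a)⁻¹ - (x + c)⁻¹) = log c - log a := by
  have hderiv : ∀ x ∈ Ici (0 : ℝ),
      HasDerivAt (fun x => log (x + a) - log (x + c)) ((x + a)⁻¹ - (x + c)⁻¹) x := by
    intro x (hx : 0 ≤ x)
    have hxa : x + a ≠ 0 := by positivity
    have hxc : x + c ≠ 0 := by linarith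
    simpa only [one_div] using (((hasDerivAt_id' x).add_const a).log hxa).fun_sub
      (((hasDerivAt_id' x).add_const c).log hxc)
  have hnonneg : ∀ x ∈ Ioi (0 : ℝ), 0 ≤ (x + a)⁻¹ - (x + c)⁻¹ := by
    intro x (hx : 0 < x)
    exact sub_nonneg.2 (inv_anti₀ (by positivity) (by linarith))
  rw [integral_Ioi_of_hasDerivAt_of_nonneg' hderiv hnonneg
    (tendsto_log_add_sub_log_add_atTop a c)]
  simp

/-- Loglogistic model (`Dagum with a = 1, q = 1`), trend `c = b`: the record probability of
the `n`-th observation equals `log(n)/(n−1)` exactly, for `n ≥ 2`. -/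
theorem stmt11 (b : ℝ) (hb : 0 < b) (n : ℕ) (hn : 2 ≤ n) :
    (∫ x in Ioi (0 : ℝ),
        (∏ i ∈ Finset.range (n - 1), (x + b * (i + 1)) / (x + b * (i + 1) + b)) *
        (b / (x + b) ^ 2))
      = Real.log n / ((n : ℝ) - 1) := by
  have hn1 : (1 : ℝ) < n := by exact_mod_cast hn
  have hcast : ((n - 1 : ℕ) : ℝ) + 1 = n := by
    rw [Nat.cast_sub (by omega), Nat.cast_one, sub_add_cancel]
  have hintegrand : ∀ x ∈ Ioi (0 : ℝ),
      (∏ i ∈ Finset.range (n - 1), (x + b * (i + 1)) / (x + b * (i + 1) + b)) *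
        (b / (x + b) ^ 2) = ((n : ℝ) - 1)⁻¹ * ((x + b)⁻¹ - (x + b * n)⁻¹) := by
    intro x (hx : 0 < x)
    rw [prod_range_add_mul_succ_div_add_mul_succ_add x b (fun i => by positivity), hcast]
    have hxbn : x + b * n ≠ 0 := by positivity
    have hxb : x + b ≠ 0 := by positivity
    have hn1' : (n : ℝ) - 1 ≠ 0 := by linarith
    field_simp
    ring
  rw [setIntegral_congr_fun measurableSet_Ioi hintegrand, integral_const_mul,
    integral_Ioi_inv_add_sub_inv_add hb (le_mul_of_one_le_right hb.le hn1.le),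
    log_mul hb.ne' (by positivity)]
  field_simp
  ring
end

section
/- In the Dagum model with a = 1, c = b and integer q ≥ 2, p_{n,0}^{(q)} = (q/(n−1)^q)((−1)^{q−1} log n + Σ_{k=1}^{q−1} C(q−1,k)((−1)^{q−1−k}/k)(n^k − 1)), and consequently p_{n,0}^{(q)} ~ (q/(q−1))·(1/n) as n → ∞. -/
open MeasureTheory Set Real Filter Topology

/-!
Expanding `(y - 1) ^ m = (-1) ^ m + ∑ C(m, k) (-1) ^ (m - k) y ^ k` splits the integrand
`(y - 1) ^ m / y` into `(-1) ^ m / y` plus a polynomial, whose primitive gives the closed form.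
After division by `n ^ m`, the logarithm and all powers `n ^ k` with `k < m` vanish in the
limit, leaving the top coefficient `1 / m`; hence `p_{n,0} · n ≈ q (n / (n - 1)) ^ q / m`,
which tends to `q / (q - 1)`.
-/

theorem sub_one_pow_eq (m : ℕ) (y : ℝ) :
    (y - 1) ^ m =
      (-1) ^ m + ∑ k ∈ Finset.Icc 1 m, (m.choose k : ℝ) * (-1) ^ (m - k) * y ^ k := by
  rw [sub_eq_add_neg, add_pow, Finset.range_eq_Ico,
    Finset.sum_eq_sum_Ico_succ_bot m.add_one_pos, Finset.Ico_add_one_right_eq_Icc]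
  simp only [pow_zero, one_mul, Nat.sub_zero, Nat.choose_zero_right, Nat.cast_one, mul_one,
    zero_add]
  congr 1
  exact Finset.sum_congr rfl fun k _ => by ring

noncomputable def primitiveSubOnePowDiv (m : ℕ) (y : ℝ) : ℝ :=
  (-1) ^ m * log y + ∑ k ∈ Finset.Icc 1 m, (m.choose k : ℝ) * ((-1) ^ (m - k) / k) * y ^ k

theorem hasDerivAt_primitiveSubOnePowDiv (m : ℕ) {y : ℝ} (hy : y ≠ 0) :
    HasDerivAt (primitiveSubOnePowDiv m) ((y - 1) ^ m / y) y := by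
  have hterm : ∀ k ∈ Finset.Icc 1 m,
      HasDerivAt (fun y : ℝ => (m.choose k : ℝ) * ((-1) ^ (m - k) / k) * y ^ k)
        ((m.choose k : ℝ) * (-1) ^ (m - k) * y ^ k / y) y := by
    intro k hk
    have hk : 1 ≤ k := (Finset.mem_Icc.1 hk).1
    refine ((hasDerivAt_pow k y).const_mul _).congr_deriv ?_
    rw [pow_sub₀ y hy hk, pow_one]
    field_simp
  refine (((hasDerivAt_log hy).const_mul ((-1 : ℝ) ^ m)).add
    (HasDerivAt.fun_sum hterm)).congr_deriv ?_
  rw [sub_one_pow_eq, add_div, Finset.sum_div, div_eq_mul_inv ((-1 : ℝ) ^ m)]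

theorem integral_Ioo_sub_one_pow_div {m : ℕ} {x : ℝ} (hx : 1 ≤ x) :
    ∫ y in Ioo 1 x, (y - 1) ^ m / y =
      (-1) ^ m * log x +
        ∑ k ∈ Finset.Icc 1 m, (m.choose k : ℝ) * ((-1) ^ (m - k) / k) * (x ^ k - 1) := by
  have hne : ∀ y ∈ uIcc 1 x, y ≠ 0 := fun y hy =>
    (one_pos.trans_le (uIcc_of_le hx ▸ hy).1).ne'
  have hint : IntervalIntegrable (fun y : ℝ => (y - 1) ^ m / y) volume 1 x :=
    (ContinuousOn.div (by fun_prop) continuousOn_id hne).intervalIntegrable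
  rw [← integral_Ioc_eq_integral_Ioo, ← intervalIntegral.integral_of_le hx,
    intervalIntegral.integral_eq_sub_of_hasDerivAt
      (fun y hy => hasDerivAt_primitiveSubOnePowDiv m (hne y hy)) hint]
  simp only [primitiveSubOnePowDiv, log_one, mul_zero, one_pow, zero_add, add_sub_assoc,
    ← Finset.sum_sub_distrib, mul_sub, mul_one]

theorem tendsto_log_div_pow_atTop {m : ℕ} (hm : m ≠ 0) :
    Tendsto (fun x : ℝ => log x / x ^ m) atTop (𝓝 0) := by
  have := isLittleO_log_rpow_atTop (r := m) (by positivity)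
  simp only [rpow_natCast] at this
  exact this.tendsto_div_nhds_zero

theorem tendsto_pow_sub_one_div_pow_atTop {k m : ℕ} (hkm : k ≤ m) (hm : m ≠ 0) :
    Tendsto (fun x : ℝ => (x ^ k - 1) / x ^ m) atTop (𝓝 (if k = m then 1 else 0)) := by
  have hinv : Tendsto (fun x : ℝ => 1 / x ^ m) atTop (𝓝 0) := by
    simpa only [one_div, Function.comp_def] using
      tendsto_inv_atTop_zero.comp (tendsto_pow_atTop hm)
  have hpow : Tendsto (fun x : ℝ => x ^ k / x ^ m) atTop (𝓝 (if k = m then 1 else 0)) := by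
    split_ifs with hk
    · subst hk
      refine tendsto_const_nhds.congr' ?_
      filter_upwards [eventually_gt_atTop 0] with x hx
      exact (div_self (pow_pos hx k).ne').symm
    · exact tendsto_pow_div_pow_atTop_zero (lt_of_le_of_ne hkm hk)
  simpa only [sub_div, sub_zero] using hpow.sub hinv

theorem tendsto_integral_Ioo_sub_one_pow_div_div_pow {m : ℕ} (hm : m ≠ 0) :
    Tendsto (fun x : ℝ => (∫ y in Ioo 1 x, (y - 1) ^ m / y) / x ^ m) atTop (𝓝 (1 / m)) := by
  set c : ℕ → ℝ := fun k => (m.choose k : ℝ) * ((-1) ^ (m - k) / k)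
  have hlim : Tendsto (fun x : ℝ => (-1) ^ m * (log x / x ^ m) +
      ∑ k ∈ Finset.Icc 1 m, c k * ((x ^ k - 1) / x ^ m)) atTop
      (𝓝 ((-1) ^ m * 0 + ∑ k ∈ Finset.Icc 1 m, c k * (if k = m then 1 else 0))) :=
    ((tendsto_log_div_pow_atTop hm).const_mul _).add <| tendsto_finsetSum _ fun k hk =>
      (tendsto_pow_sub_one_div_pow_atTop (Finset.mem_Icc.1 hk).2 hm).const_mul _
  have htop : ∑ k ∈ Finset.Icc 1 m, c k * (if k = m then 1 else 0) = 1 / m := by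
    simp [c, Nat.one_le_iff_ne_zero.2 hm]
  rw [mul_zero, zero_add, htop] at hlim
  refine hlim.congr' ?_
  filter_upwards [eventually_ge_atTop 1] with x hx
  rw [integral_Ioo_sub_one_pow_div hx, add_div, Finset.sum_div]
  simp only [mul_div_assoc]
  rfl

/-- Dagum model with `a = 1`, `c = b`, integer `q ≥ 2`: the record probability
`p_{n,0}^{(q)} = q(n−1)^{−q} ∫_1^n (y−1)^{q−1}/y dy` admits the closed form
`(q/(n−1)^q)((−1)^{q−1} log n + Σ_{k=1}^{q−1} C(q−1,k)((−1)^{q−1−k}/k)(n^k − 1))`, and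
consequently `p_{n,0}^{(q)} ~ (q/(q−1))·(1/n)` as `n → ∞`. -/
theorem stmt12 (q : ℕ) (hq : 2 ≤ q) :
    (∀ n : ℕ, 2 ≤ n →
      (q : ℝ) / ((n : ℝ) - 1) ^ q * ∫ y in Ioo (1 : ℝ) (n : ℝ), (y - 1) ^ (q - 1) / y
        = (q : ℝ) / ((n : ℝ) - 1) ^ q *
          ((-1 : ℝ) ^ (q - 1) * Real.log n +
            ∑ k ∈ Finset.Icc 1 (q - 1),
              ((q - 1).choose k : ℝ) * ((-1 : ℝ) ^ (q - 1 - k) / k) * ((n : ℝ) ^ k - 1))) ∧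
    Tendsto (fun n : ℕ =>
        ((q : ℝ) / ((n : ℝ) - 1) ^ q * ∫ y in Ioo (1 : ℝ) (n : ℝ), (y - 1) ^ (q - 1) / y)
          * (n : ℝ))
      atTop (nhds ((q : ℝ) / ((q : ℝ) - 1))) := by
  refine ⟨fun n hn => ?_, ?_⟩
  · rw [integral_Ioo_sub_one_pow_div (by exact_mod_cast (by omega : 1 ≤ n))]
  obtain ⟨m, rfl⟩ : ∃ m, q = m + 1 := ⟨q - 1, by omega⟩
  simp only [Nat.add_sub_cancel]
  have hratio : Tendsto (fun n : ℕ => (n : ℝ) / (n - 1)) atTop (𝓝 1) := by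
    simpa only [← sub_eq_add_neg] using tendsto_natCast_div_add_atTop (-1 : ℝ)
  have hI := (tendsto_integral_Ioo_sub_one_pow_div_div_pow (m := m) (by omega)).comp
    tendsto_natCast_atTop_atTop
  have hlim := (tendsto_const_nhds (x := ((m + 1 : ℕ) : ℝ))).mul ((hratio.pow (m + 1)).mul hI)
  convert hlim.congr' ?_ using 2
  · rw [one_pow, one_mul, Nat.cast_succ, add_sub_cancel_right, mul_one_div]
  filter_upwards [eventually_ge_atTop 2] with n hn
  have hn1 : (n : ℝ) - 1 ≠ 0 := by
    have : (2 : ℝ) ≤ n := by exact_mod_cast hn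
    linarith
  have hn0 : (n : ℝ) ≠ 0 := by positivity
  simp only [Function.comp_apply, div_pow]
  field_simp
  ring
end

section
/- In the Dagum model with a = 1, c = b and 0 < q < 1, p_{n,0}^{(q)} ~ n^{−q} q Γ(1−q) Γ(q) as n → ∞. -/
/-! The substitution `y = 1 / x` turns `∫_1^∞ (y - 1)^(q-1) / y dy` into the Beta integral
`B(1 - q, q) = Γ(q) Γ(1 - q)`, so the integral over `(1, n)` converges to `Γ(q) Γ(1 - q)`;
together with `(n - 1)^(-q) ~ n^(-q)` this gives the asymptotics. -/

open MeasureTheory Set Real Filter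

namespace Real

variable {a b : ℝ}

lemma ofReal_rpow_mul_one_sub_rpow {x : ℝ} (hx : x ∈ Icc (0 : ℝ) 1) :
    (((x ^ (a - 1) * (1 - x) ^ (b - 1) : ℝ)) : ℂ) =
      (x : ℂ) ^ ((a : ℂ) - 1) * (1 - (x : ℂ)) ^ ((b : ℂ) - 1) := by
  rw [Complex.ofReal_mul, Complex.ofReal_cpow hx.1, Complex.ofReal_cpow (sub_nonneg.2 hx.2)]
  push_cast
  rfl

lemma integrableOn_rpow_mul_one_sub_rpow (ha : 0 < a) (hb : 0 < b) :
    IntegrableOn (fun x : ℝ => x ^ (a - 1) * (1 - x) ^ (b - 1)) (Ioo 0 1) := by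
  have h := Complex.betaIntegral_convergent (u := a) (v := b) (by simpa) (by simpa)
  rw [intervalIntegrable_iff_integrableOn_Ioc_of_le zero_le_one] at h
  refine IntegrableOn.congr_fun (h.mono_set Ioo_subset_Ioc_self).re (fun x hx => ?_)
    measurableSet_Ioo
  rw [← ofReal_rpow_mul_one_sub_rpow (Ioo_subset_Icc_self hx), RCLike.re_to_complex,
    Complex.ofReal_re]

lemma integral_rpow_mul_one_sub_rpow (ha : 0 < a) (hb : 0 < b) :
    ∫ x in Ioo (0 : ℝ) 1, x ^ (a - 1) * (1 - x) ^ (b - 1) =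
      Gamma a * Gamma b / Gamma (a + b) := by
  have h := Complex.betaIntegral_eq_Gamma_mul_div a b (by simpa) (by simpa)
  rw [Complex.betaIntegral, ← intervalIntegral.integral_congr (fun x hx =>
      ofReal_rpow_mul_one_sub_rpow (a := a) (b := b) (by rwa [uIcc_of_le zero_le_one] at hx)),
    intervalIntegral.integral_ofReal, ← Complex.ofReal_add, Complex.Gamma_ofReal,
    Complex.Gamma_ofReal, Complex.Gamma_ofReal] at h
  rw [← integral_Ioc_eq_integral_Ioo, ← intervalIntegral.integral_of_le zero_le_one]
  exact_mod_cast h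

lemma abs_deriv_inv_smul_sub_one_rpow_div_rpow {x : ℝ} (hx : x ∈ Ioo (0 : ℝ) 1) :
    |-(x ^ 2)⁻¹| • ((x⁻¹ - 1) ^ (a - 1) / x⁻¹ ^ (a + b)) =
      x ^ (b - 1) * (1 - x) ^ (a - 1) := by
  obtain ⟨hx0, hx1⟩ := hx
  have h1x : 0 ≤ 1 - x := by linarith
  have hsub : x⁻¹ - 1 = (1 - x) * x⁻¹ := by field_simp
  rw [smul_eq_mul, abs_neg, abs_of_pos (by positivity), hsub, mul_rpow h1x (by positivity),
    inv_rpow hx0.le, inv_rpow hx0.le, ← rpow_natCast, ← rpow_neg hx0.le, ← rpow_neg hx0.le,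
    ← rpow_neg hx0.le]
  have e : x ^ (-((2 : ℕ) : ℝ)) * x ^ (-(a - 1)) / x ^ (-(a + b)) = x ^ (b - 1) := by
    rw [← rpow_add hx0, ← rpow_sub hx0]; congr 1; push_cast; ring
  rw [← e]; ring

lemma image_inv_Ioo_zero_one : (fun x : ℝ => x⁻¹) '' Ioo 0 1 = Ioi 1 := by
  rw [image_inv_eq_inv, inv_Ioo_0_left one_pos, inv_one]

lemma integrableOn_Ioi_one_sub_one_rpow_div_rpow (ha : 0 < a) (hb : 0 < b) :
    IntegrableOn (fun y : ℝ => (y - 1) ^ (a - 1) / y ^ (a + b)) (Ioi 1) := by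
  rw [← image_inv_Ioo_zero_one, integrableOn_image_iff_integrableOn_abs_deriv_smul
    measurableSet_Ioo (fun x hx => (hasDerivAt_inv hx.1.ne').hasDerivWithinAt)
    inv_injective.injOn]
  exact (integrableOn_rpow_mul_one_sub_rpow hb ha).congr_fun
    (fun x hx => (abs_deriv_inv_smul_sub_one_rpow_div_rpow hx).symm) measurableSet_Ioo

lemma integral_Ioi_one_sub_one_rpow_div_rpow (ha : 0 < a) (hb : 0 < b) :
    ∫ y in Ioi 1, (y - 1) ^ (a - 1) / y ^ (a + b) = Gamma a * Gamma b / Gamma (a + b) := by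
  rw [← image_inv_Ioo_zero_one, integral_image_eq_integral_abs_deriv_smul
    measurableSet_Ioo (fun x hx => (hasDerivAt_inv hx.1.ne').hasDerivWithinAt)
    inv_injective.injOn, setIntegral_congr_fun measurableSet_Ioo
    (fun x hx => abs_deriv_inv_smul_sub_one_rpow_div_rpow hx),
    integral_rpow_mul_one_sub_rpow hb ha, mul_comm, add_comm]

end Real

lemma tendsto_setIntegral_Ioo_natCast {E : Type*} [NormedAddCommGroup E] [NormedSpace ℝ E]
    {f : ℝ → E} {a : ℝ} (hf : IntegrableOn f (Ioi a)) :
    Tendsto (fun n : ℕ => ∫ y in Ioo a n, f y) atTop (nhds (∫ y in Ioi a, f y)) := by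
  refine (intervalIntegral_tendsto_integral_Ioi a hf tendsto_natCast_atTop_atTop).congr' ?_
  filter_upwards [tendsto_natCast_atTop_atTop.eventually_ge_atTop a] with n hn
  rw [intervalIntegral.integral_of_le hn, integral_Ioc_eq_integral_Ioo]

lemma tendsto_natCast_sub_one_rpow_div_rpow (s : ℝ) :
    Tendsto (fun n : ℕ => ((n : ℝ) - 1) ^ s / (n : ℝ) ^ s) atTop (nhds 1) := by
  have h : Tendsto (fun n : ℕ => (1 - 1 / (n : ℝ)) ^ s) atTop (nhds 1) := by
    have h1 : Tendsto (fun n : ℕ => 1 - 1 / (n : ℝ)) atTop (nhds 1) := by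
      simpa using tendsto_const_nhds.sub (tendsto_one_div_atTop_nhds_zero_nat (𝕜 := ℝ))
    simpa using h1.rpow_const (p := s) (Or.inl one_ne_zero)
  refine h.congr' ?_
  filter_upwards [eventually_ge_atTop 1] with n hn
  have hn : (1 : ℝ) ≤ n := by exact_mod_cast hn
  rw [← div_rpow (by linarith) (by linarith), one_sub_div (by positivity)]

/-- Dagum model with `a = 1`, `c = b`, `0 < q < 1`: the record probability
`p_{n,0}^{(q)} = q(n−1)^{−q} ∫_1^n (y−1)^{q−1}/y dy` satisfies
`p_{n,0}^{(q)} ~ n^{−q} q Γ(1−q) Γ(q)` as `n → ∞`. -/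
theorem stmt13 (q : ℝ) (hq0 : 0 < q) (hq1 : q < 1) :
    Tendsto (fun n : ℕ =>
        (q * ((n : ℝ) - 1) ^ (-q) * ∫ y in Ioo (1 : ℝ) (n : ℝ), (y - 1) ^ (q - 1) / y)
          / ((n : ℝ) ^ (-q) * q * Real.Gamma (1 - q) * Real.Gamma q))
      atTop (nhds 1) := by
  have hq1' : 0 < 1 - q := sub_pos.2 hq1
  have hint := integrableOn_Ioi_one_sub_one_rpow_div_rpow hq0 hq1'
  have hval := integral_Ioi_one_sub_one_rpow_div_rpow hq0 hq1'
  simp only [add_sub_cancel, rpow_one, Gamma_one, div_one] at hint hval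
  have hΓ : Gamma q * Gamma (1 - q) ≠ 0 :=
    (mul_pos (Gamma_pos_of_pos hq0) (Gamma_pos_of_pos hq1')).ne'
  have h := (tendsto_natCast_sub_one_rpow_div_rpow (-q)).mul
    ((tendsto_setIntegral_Ioo_natCast hint).div_const (Gamma q * Gamma (1 - q)))
  rw [hval, div_self hΓ, mul_one] at h
  refine h.congr' ?_
  filter_upwards [eventually_gt_atTop 0] with n hn
  have hn : (n : ℝ) ^ (-q) ≠ 0 := (rpow_pos_of_pos (by exact_mod_cast hn) _).ne'
  field_simp
end

section
/- Let F(x) = 1 − 1/x for x > 1 (Pareto) and c = 1. Then for δ ≠ n−1, the δ-record probability p_{n,δ} = (1/(n−1−δ)^2)((n−1) log((n − min{1,δ})/max{1,δ}) − min{1,δ}(n−1−δ)), and p_{n,δ} = 1/(2(n−1)) if δ = n−1. -/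
/-!
Partial fractions give, for `c ≠ 0`,
`(x - δ) / (x² (x + c)) = (c + δ)/c² · (1/x - 1/(x + c)) - δ/(c x²)`,
so `(c + δ)/c² · (log x - log (x + c)) + δ/(c x)` is an antiderivative tending to `0` at `∞`;
for `c = 0` one can take `-1/x + δ/(2x²)`. The integrand is nonnegative on `(a, ∞)` when `δ ≤ a`,
so the improper integral is minus the antiderivative at `a`. For `a = max δ 1` the identities
`min 1 δ + max 1 δ = 1 + δ` and `min 1 δ * max 1 δ = δ` turn this into the stated closed form.
-/

open MeasureTheory Set Real Filter Topology

section ImproperIntegrals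

variable {a δ : ℝ}

lemma hasDerivAt_log_sub_log_add_add_div (δ c : ℝ) (hc : c ≠ 0) {x : ℝ} (hx : 0 < x)
    (hxc : 0 < x + c) :
    HasDerivAt (fun y => (c + δ) / c ^ 2 * (log y - log (y + c)) + δ / c * y⁻¹)
      ((x - δ) / (x ^ 2 * (x + c))) x := by
  have h := (((hasDerivAt_log hx.ne').sub ((hasDerivAt_log hxc.ne').comp_add_const x c)).const_mul ((c + δ) / c ^ 2)).add
    ((hasDerivAt_inv hx.ne').const_mul (δ / c))
  refine h.congr_deriv ?_
  field_simp
  ring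

lemma tendsto_log_sub_log_add_add_div_atTop (δ c : ℝ) :
    Tendsto (fun y => (c + δ) / c ^ 2 * (log y - log (y + c)) + δ / c * y⁻¹) atTop (𝓝 0) := by
  have hlog : Tendsto (fun y => log y - log (y + c)) atTop (𝓝 0) := by
    simpa using (tendsto_log_comp_add_sub_log c).neg
  simpa using (hlog.const_mul _).add (tendsto_inv_atTop_zero.const_mul (δ / c))

lemma integral_Ioi_sub_div_sq_mul_add {c : ℝ} (hc : c ≠ 0) (ha : 0 < a) (hδ : δ ≤ a)
    (hac : 0 < a + c) :
    ∫ x in Ioi a, (x - δ) / (x ^ 2 * (x + c))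
      = (c + δ) / c ^ 2 * log ((a + c) / a) - δ / (c * a) := by
  have hderiv : ∀ x ∈ Ici a, HasDerivAt
      (fun y => (c + δ) / c ^ 2 * (log y - log (y + c)) + δ / c * y⁻¹)
      ((x - δ) / (x ^ 2 * (x + c))) x := fun x (hx : a ≤ x) =>
    hasDerivAt_log_sub_log_add_add_div δ c hc (ha.trans_le hx) (by linarith)
  have hnonneg : ∀ x ∈ Ioi a, 0 ≤ (x - δ) / (x ^ 2 * (x + c)) := fun x (hx : a < x) =>
    div_nonneg (by linarith) (mul_nonneg (sq_nonneg x) (by linarith))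
  rw [integral_Ioi_of_hasDerivAt_of_nonneg' hderiv hnonneg
    (tendsto_log_sub_log_add_add_div_atTop δ c), log_div hac.ne' ha.ne']
  field_simp
  ring

lemma integral_Ioi_sub_div_sq_mul_self (ha : 0 < a) (hδ : δ ≤ a) :
    ∫ x in Ioi a, (x - δ) / (x ^ 2 * x) = (2 * a - δ) / (2 * a ^ 2) := by
  have hderiv : ∀ x ∈ Ici a, HasDerivAt (fun y => -y⁻¹ + δ / 2 * (y ^ 2)⁻¹)
      ((x - δ) / (x ^ 2 * x)) x := by
    intro x (hx : a ≤ x)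
    have hx0 : x ≠ 0 := (ha.trans_le hx).ne'
    have h := (hasDerivAt_inv hx0).neg.add
      (((hasDerivAt_pow 2 x).inv (pow_ne_zero 2 hx0)).const_mul (δ / 2))
    refine h.congr_deriv ?_
    field_simp
    ring
  have hnonneg : ∀ x ∈ Ioi a, 0 ≤ (x - δ) / (x ^ 2 * x) := fun x (hx : a < x) =>
    div_nonneg (by linarith) (by have : 0 < x := ha.trans hx; positivity)
  have hlim : Tendsto (fun y : ℝ => -y⁻¹ + δ / 2 * (y ^ 2)⁻¹) atTop (𝓝 0) := by
    simpa using tendsto_inv_atTop_zero.neg.add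
      ((tendsto_pow_atTop two_ne_zero).inv_tendsto_atTop.const_mul (δ / 2))
  rw [integral_Ioi_of_hasDerivAt_of_nonneg' hderiv hnonneg hlim]
  field_simp
  ring

end ImproperIntegrals

/-- Pareto LDM (`F(x) = 1 − 1/x` for `x > 1`, trend `c = 1`): the δ-record probability
`p_{n,δ} = ∫_{max{δ,1}}^∞ (x−δ)/(x²(x+n−1−δ)) dx` has the stated closed form when
`δ ≠ n−1`, and equals `1/(2(n−1))` when `δ = n−1`. -/
theorem stmt14 (n : ℕ) (hn : 2 ≤ n) (δ : ℝ) :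
    (δ ≠ (n : ℝ) - 1 →
      (∫ x in Ioi (max δ 1), (x - δ) / (x ^ 2 * (x + (n : ℝ) - 1 - δ)))
        = 1 / ((n : ℝ) - 1 - δ) ^ 2 *
          (((n : ℝ) - 1) * Real.log (((n : ℝ) - min 1 δ) / max 1 δ)
            - min 1 δ * ((n : ℝ) - 1 - δ))) ∧
    (δ = (n : ℝ) - 1 →
      (∫ x in Ioi (max δ 1), (x - δ) / (x ^ 2 * (x + (n : ℝ) - 1 - δ)))
        = 1 / (2 * ((n : ℝ) - 1))) := by
  have hn1 : (1 : ℝ) ≤ n - 1 := by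
    have : (2 : ℝ) ≤ n := by exact_mod_cast hn
    linarith
  have hmax : max δ 1 = max 1 δ := max_comm δ 1
  have hmin_add_max : min 1 δ + max 1 δ = 1 + δ := min_add_max 1 δ
  have hmin_mul_max : min 1 δ * max 1 δ = 1 * δ := min_mul_max 1 δ
  have hmax_pos : 0 < max 1 δ := zero_lt_one.trans_le (le_max_left 1 δ)
  have hmin_le : min 1 δ ≤ 1 := min_le_left 1 δ
  have hintegrand : ∀ x : ℝ, (x - δ) / (x ^ 2 * (x + (n : ℝ) - 1 - δ))
      = (x - δ) / (x ^ 2 * (x + ((n : ℝ) - 1 - δ))) := fun x => by ring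
  simp_rw [hintegrand, hmax]
  constructor
  · intro hne
    have hc : (n : ℝ) - 1 - δ ≠ 0 := sub_ne_zero.mpr hne.symm
    rw [integral_Ioi_sub_div_sq_mul_add hc hmax_pos (le_max_right 1 δ) (by linarith)]
    have hlog_arg : max 1 δ + (n - 1 - δ) = n - min 1 δ := by linarith
    have hδ_div : δ / ((n - 1 - δ) * max 1 δ) = min 1 δ / (n - 1 - δ) := by
      rw [div_eq_div_iff (mul_ne_zero hc hmax_pos.ne') hc]
      linear_combination (n - 1 - δ) * hmin_mul_max.symm
    rw [hlog_arg, hδ_div]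
    field_simp
    ring
  · rintro rfl
    simp only [sub_self, add_zero, max_eq_right hn1]
    rw [integral_Ioi_sub_div_sq_mul_self (by linarith) le_rfl]
    field_simp
    ring
end

section
/- For the standard Gumbel distribution with c > 0 and δ = 0, the asymptotic dependence index of consecutive record indicators equals 1, i.e. lim_{n→∞} E[1_{n,0} 1_{n+1,0}] / (E[1_{n,0}] E[1_{n+1,0}]) = 1 (asymptotic independence of consecutive records). -/
/-!
Write `Y j = X j + c * j`. Each `Y j` is Gumbel with weight `w j = exp (c * j)`, i.e. has CDF
`exp (-w * exp (-t))`; a maximum of independent Gumbel variables is Gumbel with the sum of the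
weights, and for independent Gumbel variables `U`, `V` of weights `u`, `v` one has
`P(U < V) = v / (u + v)` (an exponential race in disguise: `exp (-Y)` is exponential).
With `s = ∑_{1 ≤ j < n} w j`, `a = w n`, `b = w (n + 1)`, this gives
`P(record at n) = a / (s + a)`, `P(record at n + 1) = b / (s + a + b)` and
`P(both) = a / (s + a) - a / (s + a + b) = a b / ((s + a) (s + a + b))`.
So consecutive record indicators are exactly independent for every `n ≥ 2`, and the ratio is
eventually equal to `1`.
-/

open MeasureTheory ProbabilityTheory Real Filter Set Topology

noncomputable section

/-- The CDF of the Gumbel law with location `log v`. Parametrising by the weight `v` rather than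
by the location makes the weight of a maximum of independent variables the sum of their weights. -/
def gumbelCDF (v x : ℝ) : ℝ := exp (-(v * exp (-x)))

def gumbelPDF (v x : ℝ) : ℝ := v * exp (-x) * gumbelCDF v x

def gumbelMeasure (v : ℝ) : Measure ℝ :=
  volume.withDensity fun x => ENNReal.ofReal (gumbelPDF v x)

end

section GumbelMeasure

lemma gumbelCDF_pos (v x : ℝ) : 0 < gumbelCDF v x := exp_pos _

lemma gumbelCDF_le_of_le {u v : ℝ} (huv : u ≤ v) (x : ℝ) : gumbelCDF v x ≤ gumbelCDF u x := by
  unfold gumbelCDF; gcongr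

lemma prod_gumbelCDF {ι : Type*} (s : Finset ι) (w : ι → ℝ) (x : ℝ) :
    ∏ i ∈ s, gumbelCDF (w i) x = gumbelCDF (∑ i ∈ s, w i) x := by
  simp only [gumbelCDF, ← exp_sum, Finset.sum_mul, Finset.sum_neg_distrib]

lemma gumbelCDF_mul_gumbelCDF (u v x : ℝ) :
    gumbelCDF u x * gumbelCDF v x = gumbelCDF (u + v) x := by
  rw [gumbelCDF, gumbelCDF, gumbelCDF, ← exp_add]
  ring_nf

lemma gumbelPDF_nonneg {v : ℝ} (hv : 0 ≤ v) (x : ℝ) : 0 ≤ gumbelPDF v x := by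
  unfold gumbelPDF gumbelCDF; positivity

@[fun_prop]
lemma continuous_gumbelCDF (v : ℝ) : Continuous (gumbelCDF v) := by
  unfold gumbelCDF; fun_prop

@[fun_prop]
lemma continuous_gumbelPDF (v : ℝ) : Continuous (gumbelPDF v) := by
  unfold gumbelPDF; fun_prop

lemma hasDerivAt_gumbelCDF (v x : ℝ) : HasDerivAt (gumbelCDF v) (gumbelPDF v x) x := by
  have h : HasDerivAt (fun x => -(v * exp (-x))) (v * exp (-x)) x := by
    simpa [Pi.neg_def] using ((hasDerivAt_neg x).exp.const_mul v).neg
  have h' := h.exp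
  rw [mul_comm] at h'
  exact h'

lemma tendsto_gumbelCDF_atBot {v : ℝ} (hv : 0 < v) : Tendsto (gumbelCDF v) atBot (𝓝 0) :=
  tendsto_exp_atBot.comp <| tendsto_neg_atTop_atBot.comp <|
    (tendsto_exp_atTop.comp tendsto_neg_atBot_atTop).const_mul_atTop hv

lemma tendsto_gumbelCDF_atTop (v : ℝ) : Tendsto (gumbelCDF v) atTop (𝓝 1) := by
  unfold gumbelCDF
  have h : Tendsto (fun x => -(v * exp (-x))) atTop (𝓝 0) := by
    simpa using ((tendsto_exp_atBot.comp tendsto_neg_atTop_atBot).const_mul v).neg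
  simpa [Function.comp_def] using (continuous_exp.tendsto 0).comp h

lemma integrableOn_Iic_gumbelPDF {v : ℝ} (hv : 0 < v) (a : ℝ) :
    IntegrableOn (gumbelPDF v) (Iic a) := by
  refine integrableOn_Iic_of_intervalIntegral_norm_tendsto (gumbelCDF v a) a
    (fun _ => (continuous_gumbelPDF v).integrableOn_Ioc) tendsto_id ?_
  have hFTC : ∀ i, ∫ x in i..a, ‖gumbelPDF v x‖ = gumbelCDF v a - gumbelCDF v i := fun i => by
    simp_rw [Real.norm_of_nonneg (gumbelPDF_nonneg hv.le _)]
    exact intervalIntegral.integral_eq_sub_of_hasDerivAt (fun x _ => hasDerivAt_gumbelCDF v x)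
      ((continuous_gumbelPDF v).intervalIntegrable _ _)
  have h := (tendsto_gumbelCDF_atBot hv).const_sub (gumbelCDF v a)
  rw [sub_zero] at h
  exact h.congr fun i => (hFTC i).symm

lemma integrable_gumbelPDF {v : ℝ} (hv : 0 < v) : Integrable (gumbelPDF v) := by
  rw [← integrableOn_univ, ← Iic_union_Ioi (a := 0)]
  exact (integrableOn_Iic_gumbelPDF hv 0).union <| integrableOn_Ioi_deriv_of_nonneg'
    (fun x _ => hasDerivAt_gumbelCDF v x) (fun x _ => gumbelPDF_nonneg hv.le x)
    (tendsto_gumbelCDF_atTop v)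

lemma gumbelMeasure_apply {v : ℝ} (hv : 0 < v) {s : Set ℝ} (hs : MeasurableSet s) :
    gumbelMeasure v s = ENNReal.ofReal (∫ x in s, gumbelPDF v x) := by
  rw [gumbelMeasure, withDensity_apply _ hs, ofReal_integral_eq_lintegral_ofReal
    (integrable_gumbelPDF hv).integrableOn (ae_of_all _ fun x => gumbelPDF_nonneg hv.le x)]

lemma isProbabilityMeasure_gumbelMeasure {v : ℝ} (hv : 0 < v) :
    IsProbabilityMeasure (gumbelMeasure v) := by
  constructor
  rw [gumbelMeasure_apply hv MeasurableSet.univ, setIntegral_univ,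
    integral_of_hasDerivAt_of_tendsto (fun x => hasDerivAt_gumbelCDF v x)
      (integrable_gumbelPDF hv) (tendsto_gumbelCDF_atBot hv) (tendsto_gumbelCDF_atTop v),
    sub_zero, ENNReal.ofReal_one]

lemma gumbelMeasure_Iic {v : ℝ} (hv : 0 < v) (t : ℝ) :
    gumbelMeasure v (Iic t) = ENNReal.ofReal (gumbelCDF v t) := by
  rw [gumbelMeasure_apply hv measurableSet_Iic, integral_Iic_of_hasDerivAt_of_tendsto'
    (fun x _ => hasDerivAt_gumbelCDF v x) (integrableOn_Iic_gumbelPDF hv t)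
    (tendsto_gumbelCDF_atBot hv), sub_zero]

lemma gumbelMeasure_Iio {v : ℝ} (hv : 0 < v) (t : ℝ) :
    gumbelMeasure v (Iio t) = ENNReal.ofReal (gumbelCDF v t) := by
  rw [gumbelMeasure_apply hv measurableSet_Iio, ← integral_Iic_eq_integral_Iio,
    ← gumbelMeasure_apply hv measurableSet_Iic, gumbelMeasure_Iic hv]

lemma gumbelMeasure_Ioi {v : ℝ} (hv : 0 < v) (t : ℝ) :
    gumbelMeasure v (Ioi t) = ENNReal.ofReal (1 - gumbelCDF v t) := by
  rw [gumbelMeasure_apply hv measurableSet_Ioi, integral_Ioi_of_hasDerivAt_of_nonneg'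
    (fun x _ => hasDerivAt_gumbelCDF v x) (fun x _ => gumbelPDF_nonneg hv.le x)
    (tendsto_gumbelCDF_atTop v)]

lemma gumbelPDF_mul_gumbelCDF {u v : ℝ} (huv : u + v ≠ 0) (x : ℝ) :
    gumbelPDF v x * gumbelCDF u x = v / (u + v) * gumbelPDF (u + v) x := by
  simp only [gumbelPDF, ← gumbelCDF_mul_gumbelCDF u v]
  field_simp

lemma lintegral_gumbelCDF {u v : ℝ} (huv : 0 < u + v) (hv : 0 ≤ v) :
    ∫⁻ x, ENNReal.ofReal (gumbelCDF u x) ∂gumbelMeasure v = ENNReal.ofReal (v / (u + v)) := by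
  have := isProbabilityMeasure_gumbelMeasure huv
  rw [gumbelMeasure, lintegral_withDensity_eq_lintegral_mul _ (by fun_prop) (by fun_prop)]
  simp_rw [Pi.mul_apply, ← ENNReal.ofReal_mul (gumbelPDF_nonneg hv _),
    gumbelPDF_mul_gumbelCDF huv.ne', ENNReal.ofReal_mul (by positivity : 0 ≤ v / (u + v))]
  rw [lintegral_const_mul _ (by fun_prop), ← setLIntegral_univ,
    ← withDensity_apply _ MeasurableSet.univ, ← gumbelMeasure, measure_univ, mul_one]

lemma gumbelMeasure_map_add_const {v : ℝ} (hv : 0 < v) (a : ℝ) :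
    (gumbelMeasure v).map (· + a) = gumbelMeasure (v * exp a) := by
  have := isProbabilityMeasure_gumbelMeasure hv
  have := isProbabilityMeasure_gumbelMeasure (mul_pos hv (exp_pos a))
  refine Measure.ext_of_Iic _ _ fun t => ?_
  rw [Measure.map_apply (measurable_add_const a) measurableSet_Iic, preimage_add_const_Iic,
    gumbelMeasure_Iic hv, gumbelMeasure_Iic (mul_pos hv (exp_pos a)), gumbelCDF, gumbelCDF,
    mul_assoc, ← exp_add, neg_sub, sub_eq_add_neg]

end GumbelMeasure

section Races

variable {Ω : Type*} [MeasurableSpace Ω] {μ : Measure Ω} [IsFiniteMeasure μ] {U V W : Ω → ℝ}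

lemma measure_lt_eq_lintegral (hU : Measurable U) (hV : Measurable V) (hUV : IndepFun U V μ) :
    μ {ω | U ω < V ω} = ∫⁻ y, μ.map U (Iio y) ∂μ.map V := by
  have hS : MeasurableSet {p : ℝ × ℝ | p.1 < p.2} := measurableSet_lt measurable_fst measurable_snd
  rw [show {ω | U ω < V ω} = (fun ω => (U ω, V ω)) ⁻¹' {p | p.1 < p.2} from rfl,
    ← Measure.map_apply (hU.prodMk hV) hS,
    (indepFun_iff_map_prod_eq_prod_map_map hU.aemeasurable hV.aemeasurable).mp hUV,
    Measure.prod_apply_symm hS]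
  rfl

lemma measure_lt_lt_eq_lintegral (hU : Measurable U) (hV : Measurable V) (hW : Measurable W)
    (hVW : IndepFun V W μ) (hU_VW : IndepFun U (fun ω => (V ω, W ω)) μ) :
    μ {ω | U ω < V ω ∧ V ω < W ω} = ∫⁻ y, μ.map U (Iio y) * μ.map W (Ioi y) ∂μ.map V := by
  have hS : MeasurableSet {q : ℝ × ℝ × ℝ | q.1 < q.2.1 ∧ q.2.1 < q.2.2} :=
    (measurableSet_lt measurable_fst measurable_snd.fst).inter
      (measurableSet_lt measurable_snd.fst measurable_snd.snd)
  rw [show {ω | U ω < V ω ∧ V ω < W ω}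
      = (fun ω => (U ω, V ω, W ω)) ⁻¹' {q | q.1 < q.2.1 ∧ q.2.1 < q.2.2} from rfl,
    ← Measure.map_apply (hU.prodMk (hV.prodMk hW)) hS,
    (indepFun_iff_map_prod_eq_prod_map_map hU.aemeasurable (hV.prodMk hW).aemeasurable).mp hU_VW,
    (indepFun_iff_map_prod_eq_prod_map_map hV.aemeasurable hW.aemeasurable).mp hVW,
    Measure.prod_apply_symm hS,
    lintegral_prod _ (measurable_measure_prodMk_right hS).aemeasurable]
  refine lintegral_congr fun y => ?_
  rw [← lintegral_indicator_const measurableSet_Ioi]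
  refine lintegral_congr fun z => ?_
  by_cases hyz : y < z <;> simp [hyz, Iio_def]

lemma map_eq_gumbelMeasure {X : Ω → ℝ} (hX : Measurable X) {v : ℝ} (hv : 0 < v)
    (hcdf : ∀ t, μ {ω | X ω ≤ t} = ENNReal.ofReal (gumbelCDF v t)) :
    μ.map X = gumbelMeasure v := by
  have := isProbabilityMeasure_gumbelMeasure hv
  refine Measure.ext_of_Iic _ _ fun t => ?_
  rw [Measure.map_apply hX measurableSet_Iic, gumbelMeasure_Iic hv]
  exact hcdf t

lemma measure_lt_of_gumbel (hU : Measurable U) (hV : Measurable V) {u v : ℝ} (hu : 0 < u)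
    (hv : 0 < v) (hUlaw : μ.map U = gumbelMeasure u) (hVlaw : μ.map V = gumbelMeasure v)
    (hUV : IndepFun U V μ) :
    μ {ω | U ω < V ω} = ENNReal.ofReal (v / (u + v)) := by
  rw [measure_lt_eq_lintegral hU hV hUV, hUlaw, hVlaw]
  simp_rw [gumbelMeasure_Iio hu]
  exact lintegral_gumbelCDF (by linarith) hv.le

lemma measure_lt_lt_of_gumbel (hU : Measurable U) (hV : Measurable V) (hW : Measurable W)
    {u v w : ℝ} (hu : 0 < u) (hv : 0 < v) (hw : 0 < w) (hUlaw : μ.map U = gumbelMeasure u)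
    (hVlaw : μ.map V = gumbelMeasure v) (hWlaw : μ.map W = gumbelMeasure w)
    (hVW : IndepFun V W μ) (hU_VW : IndepFun U (fun ω => (V ω, W ω)) μ) :
    μ {ω | U ω < V ω ∧ V ω < W ω}
      = ENNReal.ofReal (v / (u + v)) - ENNReal.ofReal (v / (u + w + v)) := by
  have hcdf : ∀ y, gumbelMeasure u (Iio y) * gumbelMeasure w (Ioi y)
      = ENNReal.ofReal (gumbelCDF u y) - ENNReal.ofReal (gumbelCDF (u + w) y) := fun y => by
    rw [gumbelMeasure_Iio hu, gumbelMeasure_Ioi hw, ← ENNReal.ofReal_mul (gumbelCDF_pos u y).le,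
      mul_one_sub, gumbelCDF_mul_gumbelCDF, ENNReal.ofReal_sub _ (gumbelCDF_pos _ y).le]
  rw [measure_lt_lt_eq_lintegral hU hV hW hVW hU_VW, hUlaw, hVlaw, hWlaw]
  simp_rw [hcdf]
  rw [lintegral_sub (by fun_prop), lintegral_gumbelCDF (by linarith) hv.le,
    lintegral_gumbelCDF (by linarith) hv.le]
  · rw [lintegral_gumbelCDF (by linarith) hv.le]
    exact ENNReal.ofReal_ne_top
  · exact ae_of_all _ fun y => ENNReal.ofReal_le_ofReal (gumbelCDF_le_of_le (by linarith) y)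

end Races

section Maxima

variable {Ω ι : Type*} [MeasurableSpace Ω] {μ : Measure Ω} {Y : ι → Ω → ℝ}

lemma measurable_finset_sup' (hY : ∀ i, Measurable (Y i)) {s : Finset ι} (hs : s.Nonempty) :
    Measurable fun ω => s.sup' hs (Y · ω) := by
  convert Finset.measurable_sup' hs fun i _ => hY i using 1
  ext ω
  exact (Finset.sup'_apply hs Y ω).symm

lemma map_finset_sup'_eq_gumbelMeasure (hY : ∀ i, Measurable (Y i)) (hind : iIndepFun Y μ)
    {w : ι → ℝ} (hw : ∀ i, 0 < w i) (hlaw : ∀ i, μ.map (Y i) = gumbelMeasure (w i))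
    {s : Finset ι} (hs : s.Nonempty) :
    μ.map (fun ω => s.sup' hs (Y · ω)) = gumbelMeasure (∑ i ∈ s, w i) := by
  have := hind.isProbabilityMeasure
  refine map_eq_gumbelMeasure (measurable_finset_sup' hY hs)
    (Finset.sum_pos (fun i _ => hw i) hs) fun t => ?_
  have hset : {ω | s.sup' hs (Y · ω) ≤ t} = ⋂ i ∈ s, Y i ⁻¹' Iic t := by
    ext ω
    simp [Finset.sup'_le_iff]
  have hfactor : ∀ i, μ (Y i ⁻¹' Iic t) = ENNReal.ofReal (gumbelCDF (w i) t) := fun i => by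
    rw [← Measure.map_apply (hY i) measurableSet_Iic, hlaw i, gumbelMeasure_Iic (hw i)]
  rw [hset, hind.measure_inter_preimage_eq_mul s fun _ _ => measurableSet_Iic]
  simp_rw [hfactor]
  rw [← ENNReal.ofReal_prod_of_nonneg fun i _ => (gumbelCDF_pos _ _).le, prod_gumbelCDF]

lemma ProbabilityTheory.iIndepFun.indepFun_finset_sup' (hind : iIndepFun Y μ)
    (hY : ∀ i, Measurable (Y i)) {S T : Finset ι} (hST : Disjoint S T) (hS : S.Nonempty) :
    IndepFun (fun ω => S.sup' hS (Y · ω)) (fun ω (i : T) => Y i ω) μ := by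
  have h := (hind.indepFun_finset S T hST hY).comp
    (φ := fun v : S → ℝ => S.attach.sup' hS.attach v) (ψ := id)
    (measurable_finset_sup' (fun i => measurable_pi_apply i) _) measurable_id
  have hsup : ∀ ω, S.attach.sup' hS.attach (fun i => Y i ω) = S.sup' hS (Y · ω) := fun ω =>
    le_antisymm (Finset.sup'_le _ _ fun i _ => Finset.le_sup' (Y · ω) i.2)
      (Finset.sup'_le _ _ fun i hi =>
        Finset.le_sup' (fun i : S => Y i ω) (Finset.mem_attach _ ⟨i, hi⟩))
  simpa only [Function.comp_def, hsup, id] using h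

lemma ProbabilityTheory.iIndepFun.indepFun_finset_sup'_of_notMem (hind : iIndepFun Y μ)
    (hY : ∀ i, Measurable (Y i)) {S : Finset ι} (hS : S.Nonempty) {i : ι} (hi : i ∉ S) :
    IndepFun (fun ω => S.sup' hS (Y · ω)) (Y i) μ :=
  (hind.indepFun_finset_sup' hY (Finset.disjoint_singleton_right.2 hi) hS).comp measurable_id
    (measurable_pi_apply (⟨i, Finset.mem_singleton_self i⟩ : ({i} : Finset ι)))

end Maxima

section Records

def recordEvent {Ω : Type*} (Y : ℕ → Ω → ℝ) (n : ℕ) : Set Ω :=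
  {ω | ∀ j, 1 ≤ j → j < n → Y j ω < Y n ω}

variable {Ω : Type*} {Y : ℕ → Ω → ℝ} {n : ℕ}

lemma recordEvent_eq_sup'_lt (hn : (Finset.Ico 1 n).Nonempty) :
    recordEvent Y n = {ω | (Finset.Ico 1 n).sup' hn (Y · ω) < Y n ω} := by
  ext ω
  simp [recordEvent, Finset.sup'_lt_iff]

lemma recordEvent_inter_recordEvent_succ (hn : 1 ≤ n) :
    recordEvent Y n ∩ recordEvent Y (n + 1) = recordEvent Y n ∩ {ω | Y n ω < Y (n + 1) ω} := by
  ext ω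
  refine ⟨fun ⟨hA, hB⟩ => ⟨hA, hB n hn n.lt_succ_self⟩, fun ⟨hA, hnB⟩ => ⟨hA, fun j hj1 hj => ?_⟩⟩
  rcases (Nat.lt_succ_iff.1 hj).lt_or_eq with hjn | rfl
  · exact (hA j hj1 hjn).trans hnB
  · exact hnB

end Records

section RecordProbabilities

variable {Ω : Type*} [MeasurableSpace Ω] {μ : Measure Ω} {Y : ℕ → Ω → ℝ} {w : ℕ → ℝ} {n : ℕ}

lemma measure_recordEvent (hY : ∀ j, Measurable (Y j)) (hind : iIndepFun Y μ)
    (hw : ∀ j, 0 < w j) (hlaw : ∀ j, μ.map (Y j) = gumbelMeasure (w j)) (hn : 1 < n) :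
    μ (recordEvent Y n) = ENNReal.ofReal (w n / (∑ j ∈ Finset.Ico 1 n, w j + w n)) := by
  have := hind.isProbabilityMeasure
  have hne : (Finset.Ico 1 n).Nonempty := Finset.nonempty_Ico.2 hn
  rw [recordEvent_eq_sup'_lt hne]
  exact measure_lt_of_gumbel (measurable_finset_sup' hY hne) (hY n)
    (Finset.sum_pos (fun j _ => hw j) hne) (hw n)
    (map_finset_sup'_eq_gumbelMeasure hY hind hw hlaw hne) (hlaw n)
    (hind.indepFun_finset_sup'_of_notMem hY hne (by simp))

lemma measure_recordEvent_pos (hY : ∀ j, Measurable (Y j)) (hind : iIndepFun Y μ)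
    (hw : ∀ j, 0 < w j) (hlaw : ∀ j, μ.map (Y j) = gumbelMeasure (w j)) (hn : 1 < n) :
    0 < μ (recordEvent Y n) := by
  have hs : 0 < ∑ j ∈ Finset.Ico 1 n, w j :=
    Finset.sum_pos (fun j _ => hw j) (Finset.nonempty_Ico.2 hn)
  rw [measure_recordEvent hY hind hw hlaw hn, ENNReal.ofReal_pos]
  have := hw n
  positivity

lemma measure_recordEvent_inter_succ (hY : ∀ j, Measurable (Y j)) (hind : iIndepFun Y μ)
    (hw : ∀ j, 0 < w j) (hlaw : ∀ j, μ.map (Y j) = gumbelMeasure (w j)) (hn : 1 < n) :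
    μ (recordEvent Y n ∩ recordEvent Y (n + 1))
      = ENNReal.ofReal (w n / (∑ j ∈ Finset.Ico 1 n, w j + w n))
        - ENNReal.ofReal (w n / (∑ j ∈ Finset.Ico 1 n, w j + w (n + 1) + w n)) := by
  have := hind.isProbabilityMeasure
  have hne : (Finset.Ico 1 n).Nonempty := Finset.nonempty_Ico.2 hn
  have hpair : IndepFun (fun ω => (Finset.Ico 1 n).sup' hne (Y · ω))
      (fun ω => (Y n ω, Y (n + 1) ω)) μ :=
    (hind.indepFun_finset_sup' hY (T := {n, n + 1}) (by simp) hne).comp measurable_id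
      ((measurable_pi_apply (⟨n, by simp⟩ : ({n, n + 1} : Finset ℕ))).prodMk
        (measurable_pi_apply (⟨n + 1, by simp⟩ : ({n, n + 1} : Finset ℕ))))
  rw [recordEvent_inter_recordEvent_succ hn.le, recordEvent_eq_sup'_lt hne]
  exact measure_lt_lt_of_gumbel (measurable_finset_sup' hY hne) (hY n) (hY (n + 1))
    (Finset.sum_pos (fun j _ => hw j) hne) (hw n) (hw (n + 1))
    (map_finset_sup'_eq_gumbelMeasure hY hind hw hlaw hne) (hlaw n) (hlaw (n + 1))
    (hind.indepFun n.succ_ne_self.symm) hpair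

theorem measure_recordEvent_inter_succ_eq_mul (hY : ∀ j, Measurable (Y j))
    (hind : iIndepFun Y μ) (hw : ∀ j, 0 < w j) (hlaw : ∀ j, μ.map (Y j) = gumbelMeasure (w j))
    (hn : 1 < n) :
    μ (recordEvent Y n ∩ recordEvent Y (n + 1))
      = μ (recordEvent Y n) * μ (recordEvent Y (n + 1)) := by
  have hs : 0 < ∑ j ∈ Finset.Ico 1 n, w j :=
    Finset.sum_pos (fun j _ => hw j) (Finset.nonempty_Ico.2 hn)
  have ha := hw n
  have hb := hw (n + 1)
  rw [measure_recordEvent_inter_succ hY hind hw hlaw hn, measure_recordEvent hY hind hw hlaw hn,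
    measure_recordEvent hY hind hw hlaw (hn.trans n.lt_succ_self), Finset.sum_Ico_succ_top hn.le,
    ← ENNReal.ofReal_sub _ (by positivity), ← ENNReal.ofReal_mul (by positivity)]
  congr 1
  field_simp
  ring

end RecordProbabilities

theorem stmt15_general {Ω : Type*} [MeasureSpace Ω] [IsProbabilityMeasure (ℙ : Measure Ω)]
    (X : ℕ → Ω → ℝ) (hXm : ∀ n, Measurable (X n))
    (hindep : iIndepFun X ℙ)
    (hgumbel : ∀ n t, (ℙ {ω | X n ω ≤ t}).toReal = exp (-exp (-t)))
    (c : ℝ) :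
    Tendsto (fun n : ℕ =>
      (ℙ {ω | (∀ j, 1 ≤ j → j < n → X j ω + c * j < X n ω + c * n) ∧
              (∀ j, 1 ≤ j → j < n + 1 → X j ω + c * j < X (n + 1) ω + c * (n + 1))}).toReal
      / ((ℙ {ω | ∀ j, 1 ≤ j → j < n → X j ω + c * j < X n ω + c * n}).toReal *
         (ℙ {ω | ∀ j, 1 ≤ j → j < n + 1 →
              X j ω + c * j < X (n + 1) ω + c * (n + 1)}).toReal))
      atTop (nhds 1) := by
  set Y : ℕ → Ω → ℝ := fun j ω => X j ω + c * j with hY_def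
  have hY : ∀ j, Measurable (Y j) := fun j => (hXm j).add_const _
  have hind : iIndepFun Y ℙ := hindep.comp (fun j x => x + c * j) fun j => measurable_add_const _
  have hlaw : ∀ j, (ℙ : Measure Ω).map (Y j) = gumbelMeasure (exp (c * j)) := fun j => by
    have hX : (ℙ : Measure Ω).map (X j) = gumbelMeasure 1 := map_eq_gumbelMeasure (hXm j) one_pos
      fun t => by rw [gumbelCDF, one_mul, ← hgumbel j t, ENNReal.ofReal_toReal (measure_ne_top _ _)]
    rw [← one_mul (exp _), ← gumbelMeasure_map_add_const one_pos, ← hX,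
      Measure.map_map (measurable_add_const _) (hXm j)]
    rfl
  refine tendsto_const_nhds.congr' ?_
  filter_upwards [eventually_gt_atTop 1] with n hn
  have hw : ∀ j : ℕ, 0 < exp (c * j) := fun j => exp_pos _
  have hA := measure_recordEvent_pos hY hind hw hlaw hn
  have hB := measure_recordEvent_pos hY hind hw hlaw (hn.trans n.lt_succ_self)
  have hAB := measure_recordEvent_inter_succ_eq_mul hY hind hw hlaw hn
  simp only [recordEvent, hY_def, Nat.cast_succ] at hA hB hAB
  rw [ofPred_and, hAB, ENNReal.toReal_mul, div_self]
  exact (mul_pos (ENNReal.toReal_pos hA.ne' (measure_ne_top _ _))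
    (ENNReal.toReal_pos hB.ne' (measure_ne_top _ _))).ne'

/-- Gumbel LDM with `c > 0`: consecutive record indicators are asymptotically independent,
i.e. the dependence index `l_n(c,0) = E[1_{n,0}1_{n+1,0}]/(E[1_{n,0}]E[1_{n+1,0}])`
converges to 1 as `n → ∞`. Records are indexed from 1: observation `n` is a record when
`Y_n > max(Y_1, …, Y_{n−1})` with `Y_j = X_j + c j`. -/
theorem stmt15 {Ω : Type*} [MeasureSpace Ω] [IsProbabilityMeasure (ℙ : Measure Ω)]
    (X : ℕ → Ω → ℝ) (hXm : ∀ n, Measurable (X n))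
    (hindep : iIndepFun X ℙ)
    (hgumbel : ∀ n t, (ℙ {ω | X n ω ≤ t}).toReal = exp (-exp (-t)))
    (c : ℝ) (hc : 0 < c) :
    Tendsto (fun n : ℕ =>
      (ℙ {ω | (∀ j, 1 ≤ j → j < n → X j ω + c * j < X n ω + c * n) ∧
              (∀ j, 1 ≤ j → j < n + 1 → X j ω + c * j < X (n + 1) ω + c * (n + 1))}).toReal
      / ((ℙ {ω | ∀ j, 1 ≤ j → j < n → X j ω + c * j < X n ω + c * n}).toReal *
         (ℙ {ω | ∀ j, 1 ≤ j → j < n + 1 →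
              X j ω + c * j < X (n + 1) ω + c * (n + 1)}).toReal))
      atTop (nhds 1) :=
  stmt15_general X hXm hindep hgumbel c
end

section
/- If c < 0 and μ⁺ < ∞ then the expected total number of δ-records E[N_{∞,δ}] is finite, for every δ ∈ ℝ. (This resolves the Franke–Wergen–Krug conjecture on records with negative drift.) -/
open MeasureTheory ProbabilityTheory Set
open scoped ENNReal

/-!
Write `a = -c > 0` and fix `t` with `q = P(X ≤ t) < 1`. If `Y_{n+1}` is a δ-record, then either
`X_{n+1} > t + δ + a ⌊n/2⌋`, or else for every `1 ≤ j ≤ ⌊n/2⌋` the record condition forces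
`X_j < X_{n+1} - δ - a (n + 1 - j) ≤ t`. By independence,
`P(Y_{n+1} is a δ-record) ≤ P(X > t + δ + a ⌊n/2⌋) + q ^ ⌊n/2⌋`. The geometric terms are
summable, and `∑ₖ P(X > t + δ + a k) ≤ E[X⁺]/a + O(1)` is finite because `μ⁺ < ∞`.
-/

theorem ENNReal.tsum_comp_div_two (g : ℕ → ℝ≥0∞) : ∑' n, g (n / 2) = 2 * ∑' k, g k := by
  rw [← tsum_even_add_odd ENNReal.summable ENNReal.summable, two_mul]
  congr 1 <;> congr 1 <;> ext k <;> congr 1 <;> omega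

theorem exists_measure_Iic_lt_one (ν : Measure ℝ) [IsProbabilityMeasure ν] :
    ∃ t, ν (Iic t) < 1 := by
  obtain ⟨t, ht⟩ := ((tendsto_cdf_atBot ν).eventually (gt_mem_nhds zero_lt_one)).exists
  exact ⟨t, by rw [← ofReal_cdf]; simpa using ht⟩

theorem map_eq_withDensity_of_cdf {Ω : Type*} [MeasurableSpace Ω] {μ : Measure Ω}
    [IsFiniteMeasure μ] {Y : Ω → ℝ} (hY : Measurable Y) {f : ℝ → ℝ} (hf : ∀ x, 0 ≤ f x)
    (hfi : Integrable f) (hcdf : ∀ t, μ {ω | Y ω ≤ t} = ENNReal.ofReal (∫ s in Iic t, f s)) :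
    μ.map Y = volume.withDensity fun x => ENNReal.ofReal (f x) := by
  refine Measure.ext_of_Iic _ _ fun t => ?_
  rw [Measure.map_apply hY measurableSet_Iic, withDensity_apply _ measurableSet_Iic,
    ← ofReal_integral_eq_lintegral_ofReal hfi.restrict (ae_of_all _ hf)]
  exact hcdf t

theorem integrable_max_zero_withDensity {f : ℝ → ℝ} (hf : ∀ x, 0 ≤ f x) (hfi : Integrable f)
    (hmu : IntegrableOn (fun x => x * f x) (Ioi 0)) :
    Integrable (fun x => max x 0) (volume.withDensity fun x => ENNReal.ofReal (f x)) := by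
  rw [integrable_withDensity_iff_integrable_smul₀' hfi.aemeasurable.ennreal_ofReal
    (ae_of_all _ fun _ => ENNReal.ofReal_lt_top)]
  refine ((integrable_indicator_iff measurableSet_Ioi).2 hmu).congr (ae_of_all _ fun x => ?_)
  rcases lt_or_ge 0 x with hx | hx
  · simp [hx, hx.le, hf x, mul_comm]
  · simp [hx, not_lt.2 hx]

theorem tsum_measure_lt_add_mul_lt_top {Ω : Type*} [MeasureSpace Ω]
    [IsProbabilityMeasure (ℙ : Measure Ω)] {Y : Ω → ℝ} (hY : Integrable fun ω => max (Y ω) 0)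
    {a : ℝ} (ha : 0 < a) (b : ℝ) : ∑' k : ℕ, ℙ {ω | b + a * k < Y ω} < ∞ := by
  set Z : Ω → ℝ := fun ω => (max (Y ω) 0 + |b|) / a
  have hZ : Integrable Z := (hY.add (integrable_const |b|)).div_const a
  refine lt_of_le_of_lt (ENNReal.tsum_le_tsum fun k => measure_mono fun ω hω => ?_)
    (tsum_prob_mem_Ioi_lt_top hZ fun ω => by positivity)
  simp only [mem_ofPred_eq, mem_Ioi, Z, lt_div_iff₀ ha] at hω ⊢
  linarith [le_max_left (Y ω) 0, neg_le_abs b]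

/-- `Y_{n+1}` is a δ-record of `Y_j = x j + c j`; the sequence starts at index `1`. -/
def IsDeltaRecord (c δ : ℝ) (x : ℕ → ℝ) (n : ℕ) : Prop :=
  ∀ j, 1 ≤ j → j < n + 1 → x j + c * j + δ < x (n + 1) + c * (n + 1)

theorem IsDeltaRecord.lt_of_le_half {c δ t : ℝ} {x : ℕ → ℝ} {n j : ℕ}
    (hrec : IsDeltaRecord c δ x n) (hc : c < 0) (hlast : x (n + 1) ≤ t + δ - c * (n / 2 : ℕ))
    (hj1 : 1 ≤ j) (hj : j ≤ n / 2) : x j < t := by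
  have hgap : (1 : ℝ) ≤ n + 1 - j - (n / 2 : ℕ) := by
    have : j + n / 2 ≤ n := by omega
    have : (j : ℝ) + (n / 2 : ℕ) ≤ n := by exact_mod_cast this
    linarith
  have := hrec j hj1 (by omega)
  have := mul_le_mul_of_nonpos_left hgap hc.le
  linarith

theorem setOf_isDeltaRecord_subset {Ω : Type*} {X : ℕ → Ω → ℝ} {c : ℝ} (hc : c < 0) (δ t : ℝ)
    (n : ℕ) :
    {ω | IsDeltaRecord c δ (X · ω) n} ⊆
      {ω | t + δ - c * (n / 2 : ℕ) < X (n + 1) ω} ∪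
        ⋂ j ∈ Finset.Icc 1 (n / 2), {ω | X j ω ≤ t} := by
  intro ω hrec
  by_cases hlast : t + δ - c * (n / 2 : ℕ) < X (n + 1) ω
  · exact Or.inl hlast
  · refine Or.inr (mem_iInter₂.2 fun j hj => ?_)
    rw [Finset.mem_Icc] at hj
    exact (hrec.lt_of_le_half hc (not_lt.1 hlast) hj.1 hj.2).le

theorem measure_isDeltaRecord_le {Ω : Type*} [MeasurableSpace Ω] {μ : Measure Ω}
    {X : ℕ → Ω → ℝ} (hXm : ∀ n, Measurable (X n)) (hindep : iIndepFun X μ) {ν : Measure ℝ}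
    (hlaw : ∀ n, μ.map (X n) = ν) {c : ℝ} (hc : c < 0) (δ t : ℝ) (n : ℕ) :
    μ {ω | IsDeltaRecord c δ (X · ω) n} ≤
      ν (Ioi (t + δ - c * (n / 2 : ℕ))) + ν (Iic t) ^ (n / 2) := by
  have hlaw_apply : ∀ k {s : Set ℝ}, MeasurableSet s → μ (X k ⁻¹' s) = ν s := fun k s hs => by
    rw [← hlaw k, Measure.map_apply (hXm k) hs]
  calc μ {ω | IsDeltaRecord c δ (X · ω) n}
      ≤ μ {ω | t + δ - c * (n / 2 : ℕ) < X (n + 1) ω} +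
          μ (⋂ j ∈ Finset.Icc 1 (n / 2), {ω | X j ω ≤ t}) :=
        (measure_mono (setOf_isDeltaRecord_subset hc δ t n)).trans (measure_union_le _ _)
    _ = ν (Ioi (t + δ - c * (n / 2 : ℕ))) + ∏ j ∈ Finset.Icc 1 (n / 2), ν (Iic t) := by
        rw [hindep.meas_biInter (s := fun j => {ω | X j ω ≤ t})
          fun j _ => ⟨Iic t, measurableSet_Iic, rfl⟩]
        exact congr_arg₂ _ (hlaw_apply _ measurableSet_Ioi)
          (Finset.prod_congr rfl fun j _ => hlaw_apply j measurableSet_Iic)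
    _ = ν (Ioi (t + δ - c * (n / 2 : ℕ))) + ν (Iic t) ^ (n / 2) := by
        rw [Finset.prod_const, Nat.card_Icc, Nat.add_sub_cancel]

theorem stmt18_general {Ω : Type*} [MeasureSpace Ω] [IsProbabilityMeasure (ℙ : Measure Ω)]
    (X : ℕ → Ω → ℝ) (hXm : ∀ n, Measurable (X n))
    (hindep : iIndepFun X ℙ)
    (f : ℝ → ℝ) (hf : ∀ x, 0 ≤ f x)
    (hdist : ∀ n t, ℙ {ω | X n ω ≤ t} = ENNReal.ofReal (∫ s in Iic t, f s))
    (hprob : ∫ s : ℝ, f s = 1)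
    (hmu : IntegrableOn (fun x => x * f x) (Ioi (0 : ℝ)))
    (c : ℝ) (hc : c < 0) (δ : ℝ) :
    ∑' n : ℕ, ℙ {ω | ∀ j, 1 ≤ j → j < n + 1 →
        X j ω + c * j + δ < X (n + 1) ω + c * (n + 1)} < ⊤ := by
  have hfi : Integrable f := by
    by_contra h
    simp [integral_undef h] at hprob
  set ν : Measure ℝ := volume.withDensity fun x => ENNReal.ofReal (f x)
  have hlaw : ∀ n, (ℙ : Measure Ω).map (X n) = ν := fun n =>
    map_eq_withDensity_of_cdf (hXm n) hf hfi (hdist n)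
  have : IsProbabilityMeasure ν := hlaw 0 ▸ Measure.isProbabilityMeasure_map (hXm 0).aemeasurable
  obtain ⟨t, ht⟩ := exists_measure_Iic_lt_one ν
  have htail : ∑' k : ℕ, ν (Ioi (t + δ - c * k)) < ∞ := by
    have hpos : Integrable fun ω => max (X 0 ω) 0 := by
      rw [← Function.comp_def (fun x => max x 0),
        ← integrable_map_measure (by fun_prop) (hXm 0).aemeasurable, hlaw 0]
      exact integrable_max_zero_withDensity hf hfi hmu
    have := tsum_measure_lt_add_mul_lt_top hpos (neg_pos.2 hc) (t + δ)
    simp_rw [neg_mul, ← sub_eq_add_neg] at this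
    simp_rw [← hlaw 0, Measure.map_apply (hXm 0) measurableSet_Ioi]
    exact this
  calc _ ≤ ∑' n : ℕ, (fun k : ℕ => ν (Ioi (t + δ - c * k)) + ν (Iic t) ^ k) (n / 2) :=
        ENNReal.tsum_le_tsum fun n => measure_isDeltaRecord_le hXm hindep hlaw hc δ t n
    _ = 2 * (∑' k : ℕ, ν (Ioi (t + δ - c * k)) + ∑' k : ℕ, ν (Iic t) ^ k) := by
        rw [← ENNReal.tsum_add, ← ENNReal.tsum_comp_div_two]
    _ < ⊤ := ENNReal.mul_lt_top ENNReal.ofNat_lt_top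
        (ENNReal.add_lt_top.2 ⟨htail, tsum_geometric_lt_top.2 ht⟩)

/-- If `c < 0` and `μ⁺ < ∞`, the expected total number of δ-records in the linear drift
model `Y_n = X_n + cn` is finite, for every `δ ∈ ℝ`:
`E[N_{∞,δ}] = Σ_{n≥1} P(Y_n is a δ-record) < ∞`. -/
theorem stmt18 {Ω : Type*} [MeasureSpace Ω] [IsProbabilityMeasure (ℙ : Measure Ω)]
    (X : ℕ → Ω → ℝ) (hXm : ∀ n, Measurable (X n))
    (hindep : iIndepFun X ℙ)
    (f : ℝ → ℝ) (hf : ∀ x, 0 ≤ f x) (hfm : Measurable f)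
    (hdist : ∀ n t, ℙ {ω | X n ω ≤ t} = ENNReal.ofReal (∫ s in Iic t, f s))
    (hprob : ∫ s : ℝ, f s = 1)
    (hmu : IntegrableOn (fun x => x * f x) (Ioi (0 : ℝ)))
    (c : ℝ) (hc : c < 0) (δ : ℝ) :
    ∑' n : ℕ, ℙ {ω | ∀ j, 1 ≤ j → j < n + 1 →
        X j ω + c * j + δ < X (n + 1) ω + c * (n + 1)} < ⊤ :=
  stmt18_general X hXm hindep f hf hdist hprob hmu c hc δ
end
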